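/- arXiv:1901.02360 — 6 statements merged into one kernel-verified Lean document; each statement's English description precedes it below -/
import Mathlib

section
/- For a symmetric 2x2 block matrix F = [[α, β],[βᵀ, C]] over a commutative unitary ring R, with X₊ = [[α,0],[βᵀ, αI]] and F̃ = [[α³,0],[0, α(αC - βᵀβ)]], one has α⁴·F = X₊ · F̃ · X₊ᵀ. -/
/-!
A division-free block `LDU` factorisation: the usual Schur-complement factorisation through
`C - D α⁻¹ B`, with every factor scaled by a power of `α` so that no inverse is needed.
-/

open Matrix

theorem Matrix.pow_four_smul_fromBlocks_eq_mul_mul {m n R : Type*} [CommRing R] [Fintype m]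
    [Fintype n] [DecidableEq m] [DecidableEq n]
    (a : R) (B : Matrix m n R) (D : Matrix n m R) (C : Matrix n n R) :
    a ^ 4 • fromBlocks (a • 1) B D C =
      fromBlocks (a • 1) 0 D (a • 1) * fromBlocks (a ^ 3 • 1) 0 0 (a • (a • C - D * B)) *
        fromBlocks (a • 1) B 0 (a • 1) := by
  simp only [fromBlocks_multiply, fromBlocks_smul]
  congr 1 <;>
    simp only [Matrix.mul_smul, Matrix.smul_mul, Matrix.mul_one, Matrix.one_mul, Matrix.mul_zero,
      Matrix.zero_mul, add_zero, zero_add, Matrix.mul_sub, smul_sub, smul_smul] <;>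
    module

theorem schmudgen_block_Fp_general (R : Type*) [CommRing R] (k : ℕ)
    (α : R) (β : Matrix (Fin 1) (Fin k) R) (C : Matrix (Fin k) (Fin k) R)
    (F Xp Ft : Matrix (Fin 1 ⊕ Fin k) (Fin 1 ⊕ Fin k) R)
    (hF : F = Matrix.fromBlocks (α • 1) β βᵀ C)
    (hXp : Xp = Matrix.fromBlocks (α • 1) 0 βᵀ (α • 1))
    (hFt : Ft = Matrix.fromBlocks (α ^ 3 • 1) 0 0 (α • (α • C - βᵀ * β))) :
    α ^ 4 • F = Xp * Ft * Xpᵀ := by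
  subst hF hXp hFt
  simp only [fromBlocks_transpose, transpose_transpose, transpose_zero, transpose_smul,
    transpose_one]
  exact pow_four_smul_fromBlocks_eq_mul_mul α β βᵀ C

theorem schmudgen_block_Fp (R : Type*) [CommRing R] (k : ℕ)
    (α : R) (β : Matrix (Fin 1) (Fin k) R) (C : Matrix (Fin k) (Fin k) R)
    (hC : Cᵀ = C)
    (F Xp Ft : Matrix (Fin 1 ⊕ Fin k) (Fin 1 ⊕ Fin k) R)
    (hF : F = Matrix.fromBlocks (α • 1) β βᵀ C)
    (hXp : Xp = Matrix.fromBlocks (α • 1) 0 βᵀ (α • 1))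
    (hFt : Ft = Matrix.fromBlocks (α ^ 3 • 1) 0 0 (α • (α • C - βᵀ * β))) :
    α ^ 4 • F = Xp * Ft * Xpᵀ :=
  schmudgen_block_Fp_general R k α β C F Xp Ft hF hXp hFt
end

section
/- Let F ∈ S^m(ℝ[x]) be a symmetric univariate polynomial matrix. Then F(x) is positive semidefinite for all x ∈ ℝ if and only if there exist a nonzero polynomial b ∈ ℝ[x] and polynomial matrices U, V ∈ ℝ[x]^{m×m} such that b²·F = UᵀU + VᵀV. -/
/-!
Over the field ℝ(x) a symmetric matrix is congruent to a diagonal one; clearing denominators gives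
a polynomial matrix `Y` with `det Y ≠ 0` and `Yᵀ F Y = D` diagonal, and then
`(det Y)² F = (adj Y)ᵀ D (adj Y)`. Each diagonal entry `D i i = yᵢᵀ F yᵢ` (with `yᵢ` the `i`-th
column of `Y`) is nonnegative on ℝ, hence a sum of two squares `aᵢ² + cᵢ²` of polynomials, and
`U = diag(a) adj Y`, `V = diag(c) adj Y` do the job. Conversely `b(x)² · uᵀF(x)u ≥ 0`, and a
polynomial that is nonnegative off the finitely many roots of `b` is nonnegative everywhere.
-/

open Matrix Polynomial

namespace Polynomial

theorem eval_nonneg_of_forall_eval_sq_mul_nonneg {s q : ℝ[X]} (hs : s ≠ 0)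
    (h : ∀ x, 0 ≤ (s ^ 2 * q).eval x) (x : ℝ) : 0 ≤ q.eval x := by
  have hdense : Dense {x : ℝ | s.IsRoot x}ᶜ :=
    (s.finite_setOfPred_isRoot hs).countable.dense_compl ℝ
  have hoff : {x : ℝ | s.IsRoot x}ᶜ ⊆ {x | 0 ≤ q.eval x} := fun y (hy : s.eval y ≠ 0) =>
    (mul_nonneg_iff_of_pos_left (by positivity : 0 < s.eval y ^ 2)).mp (by simpa using h y)
  exact (isClosed_le continuous_const q.continuous).closure_subset_iff.mpr hoff (hdense x)

theorem sq_X_sub_C_dvd_of_isRoot_of_forall_eval_nonneg {p : ℝ[X]} {r : ℝ} (hr : p.IsRoot r)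
    (hp : ∀ x, 0 ≤ p.eval x) : (X - C r) ^ 2 ∣ p := by
  rcases eq_or_ne p 0 with rfl | hp0
  · exact dvd_zero _
  have hmin : IsLocalMin (fun x => p.eval x) r :=
    Filter.Eventually.of_forall fun x => by simpa [hr.eq_zero] using hp x
  have hderiv : p.derivative.IsRoot r := by
    rw [IsRoot.def, ← Polynomial.deriv]
    exact hmin.deriv_eq_zero
  rw [← le_rootMultiplicity_iff hp0]
  exact (one_lt_rootMultiplicity_iff_isRoot hp0).mpr ⟨hr, hderiv⟩

theorem exists_eq_sq_add_sq_mul_of_forall_eval_nonneg {p : ℝ[X]} (hdeg : 0 < p.natDegree)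
    (hp : ∀ x, 0 ≤ p.eval x) :
    ∃ c d : ℝ, ∃ q : ℝ[X], p = ((X - C c) ^ 2 + C d ^ 2) * q ∧ ∀ x, 0 ≤ q.eval x := by
  obtain ⟨z, hz⟩ := Complex.exists_root (f := p.map (algebraMap ℝ ℂ)) (by
    rw [degree_map]; exact natDegree_pos_iff_degree_pos.mp hdeg)
  rw [IsRoot.def, eval_map_algebraMap] at hz
  rcases eq_or_ne z.im 0 with him | him
  · have hr : p.IsRoot z.re := by
      rw [← Complex.re_add_im z, him, Complex.ofReal_zero, zero_mul, add_zero,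
        ← Complex.coe_algebraMap, aeval_algebraMap_apply] at hz
      simpa using hz
    obtain ⟨q, rfl⟩ := sq_X_sub_C_dvd_of_isRoot_of_forall_eval_nonneg hr hp
    exact ⟨z.re, 0, q, by simp,
      eval_nonneg_of_forall_eval_sq_mul_nonneg (X_sub_C_ne_zero z.re) hp⟩
  · have hquad : X ^ 2 - C (2 * z.re) * X + C (‖z‖ ^ 2) = (X - C z.re) ^ 2 + C z.im ^ 2 := by
      rw [Complex.sq_norm, Complex.normSq_apply]
      simp only [C_add, C_mul, C_ofNat]
      ring
    obtain ⟨q, rfl⟩ := hquad ▸ p.quadratic_dvd_of_aeval_eq_zero_im_ne_zero hz him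
    refine ⟨z.re, z.im, q, rfl, fun x => ?_⟩
    have hpos : 0 < (x - z.re) ^ 2 + z.im ^ 2 := by positivity
    exact (mul_nonneg_iff_of_pos_left hpos).mp (by simpa using hp x)

theorem exists_eq_sq_add_sq_of_forall_eval_nonneg {p : ℝ[X]} (hp : ∀ x, 0 ≤ p.eval x) :
    ∃ a b : ℝ[X], p = a ^ 2 + b ^ 2 := by
  induction hn : p.natDegree using Nat.strong_induction_on generalizing p with
  | _ n ih =>
  rcases Nat.eq_zero_or_pos n with rfl | hpos
  · refine ⟨C √(p.coeff 0), 0, ?_⟩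
    rw [← C_pow, Real.sq_sqrt (coeff_zero_eq_eval_zero p ▸ hp 0), ← eq_C_of_natDegree_eq_zero hn]
    simp
  obtain ⟨c, d, q, rfl, hq⟩ := exists_eq_sq_add_sq_mul_of_forall_eval_nonneg (hn ▸ hpos) hp
  have hq0 : q ≠ 0 := by rintro rfl; simp at hn; omega
  have hdeg : ((X - C c) ^ 2 + C d ^ 2).natDegree = 2 := by
    rw [← C_pow, natDegree_add_C, natDegree_pow, natDegree_X_sub_C]
  have hlt : q.natDegree < n := by
    rw [← hn, natDegree_mul (by rintro h; simp [h] at hdeg) hq0, hdeg]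
    omega
  obtain ⟨a, b, rfl⟩ := ih _ hlt hq rfl
  exact ⟨_, _, sq_add_sq_mul_sq_add_sq⟩

theorem eval_dotProduct_mulVec {n R : Type*} [Fintype n] [CommRing R] (F : Matrix n n R[X])
    (v : n → R[X]) (x : R) :
    (v ⬝ᵥ F *ᵥ v).eval x = (fun i => (v i).eval x) ⬝ᵥ F.map (eval x) *ᵥ fun i => (v i).eval x := by
  rw [← coe_evalRingHom, RingHom.map_dotProduct]
  congr 1
  ext i
  exact RingHom.map_mulVec _ F v i

theorem eval_dotProduct_self_nonneg {n R : Type*} [Fintype n] [CommRing R] [LinearOrder R]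
    [IsStrictOrderedRing R] (w : n → R[X]) (x : R) :
    0 ≤ (w ⬝ᵥ w).eval x := by
  rw [← coe_evalRingHom, RingHom.map_dotProduct]
  exact Finset.sum_nonneg fun i _ => mul_self_nonneg _

end Polynomial

namespace Matrix

theorem exists_map_algebraMap_eq_smul {R S : Type*} [CommRing R] [CommRing S] [Algebra R S]
    (M : Submonoid R) [IsLocalization M S] {m n : Type*} [Finite m] [Finite n]
    (P : Matrix m n S) :
    ∃ s ∈ M, ∃ Y : Matrix m n R, Y.map (algebraMap R S) = algebraMap R S s • P := by
  obtain ⟨s, hs⟩ :=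
    IsLocalization.exist_integer_multiples_of_finite M fun ij : m × n => P ij.1 ij.2
  choose Y hY using hs
  refine ⟨s, s.2, of fun i j => Y (i, j), ?_⟩
  ext i j
  simpa [Algebra.smul_def] using hY (i, j)

variable {n : Type*} [Fintype n]

theorem IsSymm.exists_isUnit_det_isDiag_transpose_mul_mul [DecidableEq n] {K : Type*} [Field K]
    [Invertible (2 : K)] {A : Matrix n n K} (hA : A.IsSymm) :
    ∃ P : Matrix n n K, IsUnit P.det ∧ (Pᵀ * A * P).IsDiag := by
  set B : LinearMap.BilinForm K (n → K) := Matrix.toLinearMap₂' K A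
  have hB : LinearMap.IsSymm B := LinearMap.isSymm_def.mpr fun v w => by
    rw [RingHom.id_apply, toLinearMap₂'_apply', toLinearMap₂'_apply', dotProduct_mulVec,
      dotProduct_comm, ← mulVec_transpose, hA.eq]
  obtain ⟨v, hv⟩ := LinearMap.BilinForm.exists_orthogonal_basis (B := B) hB
  let e : Fin (Module.finrank K (n → K)) ≃ n :=
    (finCongr (Module.finrank_fintype_fun_eq_card K)).trans (Fintype.equivFin n).symm
  let w := v.reindex e
  let P := (Pi.basisFun K n).toMatrix w
  have : Invertible P := (Pi.basisFun K n).invertibleToMatrix w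
  refine ⟨P, isUnit_det_of_invertible P, fun i j hij => ?_⟩
  have hPAP : Pᵀ * A * P = LinearMap.toMatrix₂ w w B := by
    rw [← LinearMap.toMatrix₂_mul_basis_toMatrix (Pi.basisFun K n) (Pi.basisFun K n),
      LinearMap.toMatrix₂_basisFun, LinearMap.toMatrix'_toLinearMap₂']
  show (Pᵀ * A * P) i j = 0
  rw [hPAP, LinearMap.toMatrix₂_apply, Module.Basis.reindex_apply, Module.Basis.reindex_apply]
  exact hv (e.symm.injective.ne hij)

theorem IsSymm.exists_det_ne_zero_isDiag_transpose_mul_mul [DecidableEq n] {R : Type*}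
    [CommRing R] [IsDomain R] (h2 : (2 : R) ≠ 0) {F : Matrix n n R} (hF : F.IsSymm) :
    ∃ Y : Matrix n n R, Y.det ≠ 0 ∧ (Yᵀ * F * Y).IsDiag := by
  let φ := algebraMap R (FractionRing R)
  have hφ : Function.Injective φ := IsFractionRing.injective R _
  have : Invertible (2 : FractionRing R) :=
    invertibleOfNonzero (map_ofNat φ 2 ▸ (map_ne_zero_iff φ hφ).mpr h2)
  obtain ⟨P, hPdet, hPdiag⟩ := (hF.map φ).exists_isUnit_det_isDiag_transpose_mul_mul
  obtain ⟨s, hs, Y, hY⟩ := exists_map_algebraMap_eq_smul (nonZeroDivisors R) P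
  have hs0 : φ s ≠ 0 := (map_ne_zero_iff φ hφ).mpr (nonZeroDivisors.ne_zero hs)
  refine ⟨Y, fun hdet => ?_, fun i j hij => hφ ?_⟩
  · have : φ Y.det = φ s ^ Fintype.card n * P.det := by
      rw [RingHom.map_det, RingHom.mapMatrix_apply, hY, det_smul]
    rw [hdet, map_zero] at this
    exact hPdet.ne_zero ((mul_eq_zero.mp this.symm).resolve_left (pow_ne_zero _ hs0))
  · have : (Yᵀ * F * Y).map φ = φ s ^ 2 • (Pᵀ * F.map φ * P) := by
      rw [Matrix.map_mul, Matrix.map_mul, transpose_map, hY, transpose_smul]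
      simp only [smul_mul, Matrix.mul_smul, smul_smul, sq]
      rfl
    have hij' := congr_fun (congr_fun this i) j
    rwa [map_apply, smul_apply, hPdiag hij, smul_zero, ← map_zero φ] at hij'

theorem transpose_mul_mul_apply {R : Type*} [CommRing R] (Y F : Matrix n n R) (i j : n) :
    (Yᵀ * F * Y) i j = Yᵀ i ⬝ᵥ F *ᵥ Yᵀ j := by
  rw [Matrix.mul_assoc, mul_apply']
  rfl

theorem dotProduct_transpose_mul_self_mulVec {R : Type*} [CommRing R] (U : Matrix n n R)
    (v : n → R) : v ⬝ᵥ (Uᵀ * U) *ᵥ v = U *ᵥ v ⬝ᵥ U *ᵥ v := by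
  rw [← mulVec_mulVec, dotProduct_mulVec, vecMul_transpose]

theorem det_sq_smul_eq_adjugate_transpose_mul_mul [DecidableEq n] {R : Type*} [CommRing R]
    (Y F : Matrix n n R) : Y.det ^ 2 • F = (adjugate Y)ᵀ * (Yᵀ * F * Y) * adjugate Y := by
  have hY : (adjugate Y)ᵀ * (Yᵀ * F * Y) * adjugate Y =
      (Y * adjugate Y)ᵀ * F * (Y * adjugate Y) := by
    simp only [transpose_mul, Matrix.mul_assoc]
  rw [hY, mul_adjugate, transpose_smul, transpose_one]
  simp only [smul_mul, Matrix.mul_smul, Matrix.one_mul, Matrix.mul_one, smul_smul, sq]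

theorem IsDiag.eq_transpose_mul_self_add_transpose_mul_self [DecidableEq n] {R : Type*}
    [CommRing R]
    {D : Matrix n n R} (hD : D.IsDiag) {a c : n → R} (h : ∀ i, D i i = a i ^ 2 + c i ^ 2) :
    D = (diagonal a)ᵀ * diagonal a + (diagonal c)ᵀ * diagonal c := by
  rw [← hD.diagonal_diag, diagonal_transpose, diagonal_transpose, diagonal_mul_diagonal,
    diagonal_mul_diagonal, diagonal_add]
  congr 1
  ext i
  simp [h, sq]

end Matrix

theorem psd_on_R_iff_two_sohs (m : ℕ)
    (F : Matrix (Fin m) (Fin m) (Polynomial ℝ)) (hsym : Fᵀ = F) :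
    (∀ x : ℝ, ∀ u : Fin m → ℝ,
        0 ≤ u ⬝ᵥ (F.map (fun p => p.eval x)).mulVec u) ↔
    (∃ b : Polynomial ℝ, b ≠ 0 ∧
      ∃ U V : Matrix (Fin m) (Fin m) (Polynomial ℝ),
        b ^ 2 • F = Uᵀ * U + Vᵀ * V) := by
  constructor
  · intro hF
    obtain ⟨Y, hdet, hdiag⟩ := IsSymm.exists_det_ne_zero_isDiag_transpose_mul_mul two_ne_zero hsym
    have hnonneg : ∀ i x, 0 ≤ ((Yᵀ * F * Y) i i).eval x := fun i x => by
      rw [transpose_mul_mul_apply, eval_dotProduct_mulVec]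
      exact hF x _
    choose a c hac using fun i => exists_eq_sq_add_sq_of_forall_eval_nonneg (hnonneg i)
    refine ⟨Y.det, hdet, diagonal a * adjugate Y, diagonal c * adjugate Y, ?_⟩
    rw [det_sq_smul_eq_adjugate_transpose_mul_mul,
      hdiag.eq_transpose_mul_self_add_transpose_mul_self hac]
    simp only [transpose_mul, Matrix.mul_add, Matrix.add_mul, Matrix.mul_assoc]
  · rintro ⟨b, hb, U, V, hUV⟩ x u
    let v : Fin m → ℝ[X] := fun i => C (u i)
    have hsq : b ^ 2 * (v ⬝ᵥ F *ᵥ v) = U *ᵥ v ⬝ᵥ U *ᵥ v + V *ᵥ v ⬝ᵥ V *ᵥ v := by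
      rw [← smul_eq_mul, ← dotProduct_smul, ← smul_mulVec, hUV, add_mulVec, dotProduct_add,
        dotProduct_transpose_mul_self_mulVec, dotProduct_transpose_mul_self_mulVec]
    have hnonneg := eval_nonneg_of_forall_eval_sq_mul_nonneg hb (q := v ⬝ᵥ F *ᵥ v) (fun y => by
      rw [hsq, eval_add]
      exact add_nonneg (eval_dotProduct_self_nonneg _ y) (eval_dotProduct_self_nonneg _ y)) x
    simpa [v, eval_dotProduct_mulVec] using hnonneg
end

section
/- Let F ∈ S^m(ℝ[x]) be a symmetric univariate polynomial matrix. Then F(x) is positive semidefinite for all x ∈ [0,∞) if and only if there exist a nonzero polynomial b ∈ ℝ[x] and polynomial matrices U, V ∈ ℝ[x]^{m×m} such that b(x)²·F(x) = U(x)ᵀU(x) + x·V(x)ᵀV(x). -/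
/-!
Scalar case: a real polynomial `f ≥ 0` on `(0, ∞)` of positive degree has a factor in
`{p² + X q²}`, a set closed under products: `X - r = (√-r)² + X` for a root `r ≤ 0`; `(X - r)²`
for a root `r > 0`, which is a local minimum and hence a double root; and
`(X - z)(X - z̄) = (X - |z|)² + X (2|z| - 2 Re z)` for a non-real root `z`. The cofactor is again
`≥ 0` on `(0, ∞)`, so induct on the degree.

Matrix case: induct on the size, pivoting on the last diagonal entry `a` of
`F = [[D, c], [cᵀ, a]]`. By Cauchy–Schwarz for the forms `F(x)`, either `a = 0` and then `c = 0`,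
or `a • F = w wᵀ + diag(a D - c cᵀ, 0)` with `w` the last row and `a D - c cᵀ` again positive
semidefinite on `[0, ∞)`. By induction `b² (a D - c cᵀ) = Uᵀ U + X Vᵀ V`; since `a = p² + X q²`
and `(p² + X q²)(Uᵀ U + X Vᵀ V) = (p U - X q V)ᵀ (p U - X q V) + X (q U + p V)ᵀ (q U + p V)`,
multiplying by `a b²` gives such a form for `(a b)² F`. Conversely, such a form makes `b(x)² F(x)`
positive semidefinite for `x ≥ 0`, and continuity takes care of the roots of `b`.
-/

open Matrix Polynomial

/-- The norms `p² + t q²` from `R[√-t]`, hence a submonoid. -/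
def sqAddMulSq {R : Type*} [CommRing R] (t : R) : Submonoid R where
  carrier := {f | ∃ p q, f = p ^ 2 + t * q ^ 2}
  one_mem' := ⟨1, 0, by ring⟩
  mul_mem' := by
    rintro _ _ ⟨p, q, rfl⟩ ⟨p', q', rfl⟩
    exact ⟨p * p' - t * q * q', p * q' + q * p', by ring⟩

theorem sq_mem_sqAddMulSq {R : Type*} [CommRing R] (t p : R) : p ^ 2 ∈ sqAddMulSq t :=
  ⟨p, 0, by ring⟩

theorem Continuous.nonneg_of_nonneg_off_finite {f : ℝ → ℝ} (hf : Continuous f) {T : Set ℝ}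
    (hT : T.Finite) (h : ∀ x, 0 < x → x ∉ T → 0 ≤ f x) {x : ℝ} (hx : 0 ≤ x) : 0 ≤ f x := by
  have hdense : Set.Ici (0 : ℝ) ⊆ closure (Set.Ioi 0 ∩ Tᶜ) := by
    rw [← closure_Ioi]
    exact closure_minimal ((hT.countable.dense_compl ℝ).open_subset_closure_inter isOpen_Ioi)
      isClosed_closure
  exact closure_minimal (fun y (hy : y ∈ Set.Ioi 0 ∩ Tᶜ) => h y hy.1 hy.2)
    (isClosed_le continuous_const hf) (hdense hx)

namespace Polynomial

theorem eval_nonneg_of_mem_sqAddMulSq {h : ℝ[X]} (hh : h ∈ sqAddMulSq X) {x : ℝ} (hx : 0 ≤ x) :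
    0 ≤ h.eval x := by
  obtain ⟨p, q, rfl⟩ := hh
  simp only [eval_add, eval_mul, eval_pow, eval_X]
  positivity

theorem eval_nonneg_of_eval_mul_nonneg {h g : ℝ[X]} (hh : h ∈ sqAddMulSq X) (hh0 : h ≠ 0)
    (hf : ∀ x, 0 < x → 0 ≤ (h * g).eval x) {x : ℝ} (hx : 0 < x) : 0 ≤ g.eval x := by
  refine g.continuous.nonneg_of_nonneg_off_finite h.roots.toFinset.finite_toSet
    (fun y hy hyT => ?_) hx.le
  have hpos : 0 < h.eval y :=
    (eval_nonneg_of_mem_sqAddMulSq hh hy.le).lt_of_ne' fun h0 => hyT (by simpa [hh0] using h0)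
  exact (mul_nonneg_iff_of_pos_left hpos).mp (by simpa only [eval_mul] using hf y hy)

theorem X_sub_C_mem_sqAddMulSq {r : ℝ} (hr : r ≤ 0) : X - C r ∈ sqAddMulSq (X : ℝ[X]) :=
  ⟨C √(-r), 1, by rw [← C_pow, Real.sq_sqrt (neg_nonneg.mpr hr), C_neg]; ring⟩

theorem quadratic_mem_sqAddMulSq {a b : ℝ} (hab : a ≤ b) :
    X ^ 2 - C (2 * a) * X + C (b ^ 2) ∈ sqAddMulSq (X : ℝ[X]) := by
  refine ⟨X - C b, C √(2 * b - 2 * a), ?_⟩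
  rw [← C_pow, Real.sq_sqrt (by linarith)]
  simp only [map_sub, map_mul, map_pow, map_ofNat]
  ring

theorem isRoot_re_of_aeval_eq_zero {f : ℝ[X]} {z : ℂ} (hz : aeval z f = 0) (him : z.im = 0) :
    f.IsRoot z.re := by
  have hre : z = (z.re : ℂ) := Complex.ext rfl (by simp [him])
  rw [hre, ← Complex.coe_algebraMap, aeval_algebraMap_apply_eq_algebraMap_eval] at hz
  simpa using hz

theorem X_sub_C_sq_dvd_of_isRoot_of_pos {f : ℝ[X]} (hf0 : f ≠ 0)
    (hf : ∀ x, 0 < x → 0 ≤ f.eval x) {r : ℝ} (hroot : f.IsRoot r) (hr : 0 < r) :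
    (X - C r) ^ 2 ∣ f := by
  have hmin : IsLocalMin (fun x => f.eval x) r :=
    (eventually_gt_nhds hr).mono fun y hy => by simpa only [hroot.eq_zero] using hf y hy
  have hder : (derivative f).IsRoot r := by
    rw [IsRoot.def, ← Polynomial.deriv]
    exact hmin.deriv_eq_zero
  exact (le_rootMultiplicity_iff hf0).mp
    ((one_lt_rootMultiplicity_iff_isRoot hf0).mpr ⟨hroot, hder⟩)

theorem exists_mem_sqAddMulSq_dvd {f : ℝ[X]} (hdeg : 0 < f.natDegree)
    (hf : ∀ x, 0 < x → 0 ≤ f.eval x) : ∃ h ∈ sqAddMulSq X, 0 < h.natDegree ∧ h ∣ f := by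
  obtain ⟨z, hz⟩ :=
    IsAlgClosed.exists_aeval_eq_zero ℂ f (natDegree_pos_iff_degree_pos.mp hdeg).ne'
  by_cases him : z.im = 0
  · have hroot := isRoot_re_of_aeval_eq_zero hz him
    rcases le_or_gt z.re 0 with hr | hr
    · exact ⟨_, X_sub_C_mem_sqAddMulSq hr, by simp, dvd_iff_isRoot.mpr hroot⟩
    · exact ⟨_, sq_mem_sqAddMulSq _ _, by simp,
        X_sub_C_sq_dvd_of_isRoot_of_pos (ne_zero_of_natDegree_gt hdeg) hf hroot hr⟩
  · have hdeg : (X ^ 2 - C (2 * z.re) * X + C (‖z‖ ^ 2) : ℝ[X]).natDegree = 2 := by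
      compute_degree!
    exact ⟨_, quadratic_mem_sqAddMulSq (Complex.re_le_norm z), by omega,
      quadratic_dvd_of_aeval_eq_zero_im_ne_zero f hz him⟩

theorem mem_sqAddMulSq_X_of_eval_nonneg {f : ℝ[X]} (hf : ∀ x, 0 < x → 0 ≤ f.eval x) :
    f ∈ sqAddMulSq X := by
  induction hn : f.natDegree using Nat.strong_induction_on generalizing f with
  | _ n ih =>
  rcases Nat.eq_zero_or_pos f.natDegree with h0 | hpos
  · have hc : 0 ≤ f.coeff 0 := by
      have := hf 1 one_pos
      rwa [eq_C_of_natDegree_eq_zero h0, eval_C] at this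
    rw [eq_C_of_natDegree_eq_zero h0]
    simpa [← C_pow, Real.sq_sqrt hc] using sq_mem_sqAddMulSq X (C √(f.coeff 0))
  · obtain ⟨h, hh, hhdeg, g, rfl⟩ := exists_mem_sqAddMulSq_dvd hpos hf
    have hh0 : h ≠ 0 := ne_zero_of_natDegree_gt hhdeg
    have hg0 : g ≠ 0 := right_ne_zero_of_mul (ne_zero_of_natDegree_gt hpos)
    refine mul_mem hh (ih g.natDegree ?_ (fun x => eval_nonneg_of_eval_mul_nonneg hh hh0 hf) rfl)
    rw [← hn, natDegree_mul hh0 hg0]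
    omega

end Polynomial

namespace Matrix

section Pivot

variable {R : Type*} [CommRing R] {n : Type*}

/-- For `F = [[D, c], [cᵀ, a]]` this is `a • D - c cᵀ`, the Schur complement of the pivot `a`
multiplied by `a`. -/
def scaledSchurComplement (F : Matrix (n ⊕ Unit) (n ⊕ Unit) R) : Matrix n n R :=
  of fun i j =>
    F (.inr ()) (.inr ()) * F (.inl i) (.inl j) - F (.inr ()) (.inl i) * F (.inr ()) (.inl j)

variable {F : Matrix (n ⊕ Unit) (n ⊕ Unit) R}

theorem transpose_scaledSchurComplement (hsym : Fᵀ = F) :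
    (scaledSchurComplement F)ᵀ = scaledSchurComplement F := by
  ext i j
  simp only [scaledSchurComplement, transpose_apply, of_apply]
  rw [← transpose_apply F (.inl i), hsym]
  ring

theorem map_scaledSchurComplement {S : Type*} [CommRing S] (f : R →+* S) :
    (scaledSchurComplement F).map f = scaledSchurComplement (F.map f) := by
  ext i j
  simp [scaledSchurComplement]

theorem pivot_smul_eq (hsym : Fᵀ = F) :
    F (.inr ()) (.inr ()) • F =
      vecMulVec (F (.inr ())) (F (.inr ())) + fromBlocks (scaledSchurComplement F) 0 0 0 := by
  have hF (i j) : F j i = F i j := congrFun (congrFun hsym i) j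
  ext (i | ⟨⟩) (j | ⟨⟩) <;> simp [scaledSchurComplement, vecMulVec_apply, hF _ (.inr ()), mul_comm]

end Pivot

section CommRing

variable {R : Type*} [CommRing R] {n : Type*} [Fintype n]

def IsWeightedGram (t : R) (M : Matrix n n R) : Prop :=
  ∃ U V : Matrix n n R, M = Uᵀ * U + t • (Vᵀ * V)

namespace IsWeightedGram

variable {t : R} {M : Matrix n n R}

theorem smul {a : R} (ha : a ∈ sqAddMulSq t) (hM : IsWeightedGram t M) :
    IsWeightedGram t (a • M) := by
  obtain ⟨p, q, rfl⟩ := ha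
  obtain ⟨U, V, rfl⟩ := hM
  refine ⟨p • U - (t * q) • V, q • U + p • V, ?_⟩
  simp only [transpose_sub, transpose_add, transpose_smul, Matrix.sub_mul, Matrix.mul_sub,
    Matrix.add_mul, Matrix.mul_add, Matrix.smul_mul, Matrix.mul_smul]
  module

theorem submatrix {m : Type*} [Fintype m] (hM : IsWeightedGram t M) (e : m ≃ n) :
    IsWeightedGram t (M.submatrix e e) := by
  obtain ⟨U, V, rfl⟩ := hM
  refine ⟨U.submatrix e e, V.submatrix e e, ?_⟩
  simp [submatrix_add, submatrix_smul, transpose_submatrix, submatrix_mul_equiv]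

theorem map {S : Type*} [CommRing S] (hM : IsWeightedGram t M) (f : R →+* S) :
    IsWeightedGram (f t) (M.map f) := by
  obtain ⟨U, V, rfl⟩ := hM
  refine ⟨U.map f, V.map f, ?_⟩
  simp [Matrix.map_add, Matrix.map_mul, transpose_map, Matrix.map_smul']

theorem smul_vecMulVec_add_fromBlocks {G : Matrix n n R} (hG : IsWeightedGram t G) {s : R}
    (hs : s ∈ sqAddMulSq t) (y : n ⊕ Unit → R) :
    IsWeightedGram t (s • vecMulVec y y + fromBlocks G 0 0 0) := by
  obtain ⟨U, V, rfl⟩ := hG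
  obtain ⟨p, q, rfl⟩ := hs
  let extend (W : Matrix n n R) (w : n ⊕ Unit → R) : Matrix (n ⊕ Unit) (n ⊕ Unit) R :=
    of (Sum.elim (fun i => Sum.elim (W i) 0) fun _ => w)
  refine ⟨extend U (p • y), extend V (q • y), ?_⟩
  ext (i | i) (j | j) <;> simp [extend, mul_apply, Fintype.sum_sum_type, vecMulVec_apply] <;> ring

theorem dotProduct_mulVec_nonneg [LinearOrder R] [IsStrictOrderedRing R]
    (hM : IsWeightedGram t M) (ht : 0 ≤ t) (u : n → R) : 0 ≤ u ⬝ᵥ M *ᵥ u := by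
  obtain ⟨U, V, rfl⟩ := hM
  have gram (W : Matrix n n R) : u ⬝ᵥ (Wᵀ * W) *ᵥ u = (W *ᵥ u) ⬝ᵥ (W *ᵥ u) := by
    rw [← mulVec_mulVec, dotProduct_mulVec, vecMul_transpose]
  have self_nonneg (v : n → R) : 0 ≤ v ⬝ᵥ v := Finset.sum_nonneg fun i _ => mul_self_nonneg (v i)
  rw [add_mulVec, dotProduct_add, smul_mulVec, dotProduct_smul, gram, gram, smul_eq_mul]
  exact add_nonneg (self_nonneg _) (mul_nonneg ht (self_nonneg _))

end IsWeightedGram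

theorem dotProduct_mulVec_comm {A : Matrix n n R} (hsym : Aᵀ = A) (v w : n → R) :
    v ⬝ᵥ A *ᵥ w = w ⬝ᵥ A *ᵥ v := by
  rw [dotProduct_mulVec, ← mulVec_transpose, hsym, dotProduct_comm]

theorem toBlocks₁₁_dotProduct_mulVec_nonneg [LE R] {o : Type*} [Fintype o]
    {A : Matrix (n ⊕ o) (n ⊕ o) R} (hA : ∀ v, 0 ≤ v ⬝ᵥ A *ᵥ v) (u : n → R) :
    0 ≤ u ⬝ᵥ A.toBlocks₁₁ *ᵥ u := by
  simpa [dotProduct, mulVec, Fintype.sum_sum_type, toBlocks₁₁] using hA (Sum.elim u 0)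

variable [LinearOrder R] [IsStrictOrderedRing R] {A : Matrix n n R}

theorem dotProduct_mulVec_mul_self_le (hsym : Aᵀ = A) (hA : ∀ v, 0 ≤ v ⬝ᵥ A *ᵥ v) (v w : n → R) :
    (v ⬝ᵥ A *ᵥ w) * (v ⬝ᵥ A *ᵥ w) ≤ (v ⬝ᵥ A *ᵥ v) * (w ⬝ᵥ A *ᵥ w) := by
  classical
  have hcs := (toBilin' A).apply_mul_apply_le_of_forall_zero_le
    (by simpa only [toBilin'_apply'] using hA) v w
  simpa only [toBilin'_apply', dotProduct_mulVec_comm hsym w v] using hcs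

theorem eq_zero_of_diag_eq_zero (hsym : Aᵀ = A) (hA : ∀ v, 0 ≤ v ⬝ᵥ A *ᵥ v) {i : n}
    (hi : A i i = 0) (j : n) : A i j = 0 := by
  classical
  have hcs := dotProduct_mulVec_mul_self_le hsym hA (Pi.single i 1) (Pi.single j 1)
  simp only [mulVec_single_one, single_one_dotProduct, col_apply, hi, zero_mul] at hcs
  exact mul_self_eq_zero.mp (le_antisymm hcs (mul_self_nonneg _))

theorem scaledSchurComplement_dotProduct_mulVec_nonneg {A : Matrix (n ⊕ Unit) (n ⊕ Unit) R}
    (hsym : Aᵀ = A) (hA : ∀ v, 0 ≤ v ⬝ᵥ A *ᵥ v) (u : n → R) :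
    0 ≤ u ⬝ᵥ scaledSchurComplement A *ᵥ u := by
  set e : n ⊕ Unit → R := Sum.elim 0 1
  set w : n ⊕ Unit → R := Sum.elim u 0
  have hquad : u ⬝ᵥ scaledSchurComplement A *ᵥ u =
      (e ⬝ᵥ A *ᵥ e) * (w ⬝ᵥ A *ᵥ w) - (e ⬝ᵥ A *ᵥ w) * (e ⬝ᵥ A *ᵥ w) := by
    simp only [e, w, scaledSchurComplement, dotProduct, mulVec, Fintype.sum_sum_type, of_apply,
      Sum.elim_inl, Sum.elim_inr, Pi.zero_apply, Pi.one_apply, Finset.univ_unique,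
      PUnit.default_eq_unit, Finset.sum_singleton]
    simp only [zero_mul, mul_zero, Finset.sum_const_zero, add_zero, zero_add, one_mul,
      Finset.mul_sum, Finset.sum_mul, mul_sub, sub_mul, Finset.sum_sub_distrib]
    congr 1 <;> exact Finset.sum_congr rfl fun _ _ => Finset.sum_congr rfl fun _ _ => by ring
  linarith [dotProduct_mulVec_mul_self_le hsym hA e w]

end CommRing

section Halfline

variable {n : Type*} [Fintype n]

def PosSemidefOnNonneg (F : Matrix n n ℝ[X]) : Prop :=
  ∀ x : ℝ, 0 ≤ x → ∀ u : n → ℝ, 0 ≤ u ⬝ᵥ (F.map (fun p => p.eval x)) *ᵥ u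

namespace PosSemidefOnNonneg

variable {F : Matrix n n ℝ[X]}

theorem submatrix {m : Type*} [Fintype m] (hF : PosSemidefOnNonneg F) (e : m ≃ n) :
    PosSemidefOnNonneg (F.submatrix e e) := by
  intro x hx u
  simpa [← submatrix_map, submatrix_mulVec_equiv, dotProduct_comp_equiv_symm] using
    hF x hx (u ∘ e.symm)

theorem toBlocks₁₁ {o : Type*} [Fintype o] {F : Matrix (n ⊕ o) (n ⊕ o) ℝ[X]}
    (hF : PosSemidefOnNonneg F) : PosSemidefOnNonneg F.toBlocks₁₁ :=
  fun x hx => toBlocks₁₁_dotProduct_mulVec_nonneg (A := F.map fun p => p.eval x) (hF x hx)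

theorem eval_diag_nonneg (hF : PosSemidefOnNonneg F) (i : n) {x : ℝ} (hx : 0 ≤ x) :
    0 ≤ (F i i).eval x := by
  classical
  simpa using hF x hx (Pi.single i 1)

theorem eq_zero_of_diag_eq_zero (hsym : Fᵀ = F) (hF : PosSemidefOnNonneg F) {i : n}
    (hi : F i i = 0) (j : n) : F i j = 0 := by
  refine eq_zero_of_infinite_isRoot _ ((Set.Ici_infinite 0).mono fun x hx => ?_)
  exact Matrix.eq_zero_of_diag_eq_zero (A := F.map fun p => p.eval x)
    (by rw [← transpose_map, hsym]) (hF x hx) (by simp [hi]) j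

theorem scaledSchurComplement {F : Matrix (n ⊕ Unit) (n ⊕ Unit) ℝ[X]} (hsym : Fᵀ = F)
    (hF : PosSemidefOnNonneg F) : PosSemidefOnNonneg (scaledSchurComplement F) := fun x hx => by
  rw [show (fun p : ℝ[X] => p.eval x) = evalRingHom x from rfl, map_scaledSchurComplement]
  exact scaledSchurComplement_dotProduct_mulVec_nonneg (by rw [← transpose_map, hsym]) (hF x hx)

theorem of_isWeightedGram {b : ℝ[X]} (hb : b ≠ 0) (h : IsWeightedGram X (b ^ 2 • F)) :
    PosSemidefOnNonneg F := by
  intro x hx u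
  refine Continuous.nonneg_of_nonneg_off_finite (f := fun y => u ⬝ᵥ F.map (·.eval y) *ᵥ u)
    (continuous_const.dotProduct (Continuous.matrix_mulVec
      (continuous_pi fun i => continuous_pi fun j => (F i j).continuous) continuous_const))
    b.roots.toFinset.finite_toSet (fun y hy hyb => ?_) hx
  have hby : b.eval y ≠ 0 := fun h0 => hyb (by simpa [hb] using h0)
  have hmap : (b ^ 2 • F).map (evalRingHom y) = b.eval y ^ 2 • F.map (·.eval y) := by
    ext i j
    simp
  have hnonneg := (h.map (evalRingHom y)).dotProduct_mulVec_nonneg (by simpa using hy.le) u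
  rw [hmap, smul_mulVec, dotProduct_smul, smul_eq_mul] at hnonneg
  exact (mul_nonneg_iff_of_pos_left (sq_pos_of_ne_zero hby)).mp hnonneg

theorem exists_isWeightedGram_sq_smul_of_sum_unit
    (ih : ∀ G : Matrix n n ℝ[X], Gᵀ = G → PosSemidefOnNonneg G →
      ∃ b : ℝ[X], b ≠ 0 ∧ IsWeightedGram X (b ^ 2 • G))
    {F : Matrix (n ⊕ Unit) (n ⊕ Unit) ℝ[X]} (hsym : Fᵀ = F) (hF : PosSemidefOnNonneg F) :
    ∃ b : ℝ[X], b ≠ 0 ∧ IsWeightedGram X (b ^ 2 • F) := by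
  set a := F (.inr ()) (.inr ())
  by_cases ha : a = 0
  · have hrow := hF.eq_zero_of_diag_eq_zero hsym ha
    have hblocks : F = fromBlocks F.toBlocks₁₁ 0 0 0 := by
      ext (i | ⟨⟩) (j | ⟨⟩) : 1
      · rfl
      · rw [← transpose_apply F, hsym]; exact hrow _
      · exact hrow _
      · exact hrow _
    have hsym₁₁ : F.toBlocks₁₁ᵀ = F.toBlocks₁₁ := by
      ext i j : 1
      exact (congrFun (congrFun hsym (.inl j)) (.inl i)).symm
    obtain ⟨b, hb, hG⟩ := ih F.toBlocks₁₁ hsym₁₁ hF.toBlocks₁₁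
    refine ⟨b, hb, ?_⟩
    rw [hblocks, fromBlocks_smul]
    simpa using hG.smul_vecMulVec_add_fromBlocks (one_mem _) 0
  · obtain ⟨b, hb, hG⟩ := ih _ (transpose_scaledSchurComplement hsym)
      (hF.scaledSchurComplement hsym)
    have ha_mem : a ∈ sqAddMulSq X :=
      mem_sqAddMulSq_X_of_eval_nonneg fun x hx => hF.eval_diag_nonneg _ hx.le
    refine ⟨a * b, mul_ne_zero ha hb, ?_⟩
    have hsplit : (a * b) ^ 2 • F = (a * b ^ 2) • vecMulVec (F (.inr ())) (F (.inr ())) +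
        fromBlocks (a • b ^ 2 • Matrix.scaledSchurComplement F) 0 0 0 := by
      rw [show (a * b) ^ 2 = a * b ^ 2 * a by ring, mul_smul, pivot_smul_eq hsym, smul_add,
        fromBlocks_smul]
      simp only [smul_zero, mul_smul]
    rw [hsplit]
    exact (hG.smul ha_mem).smul_vecMulVec_add_fromBlocks
      (mul_mem ha_mem (sq_mem_sqAddMulSq _ b)) _

end PosSemidefOnNonneg

end Halfline

theorem PosSemidefOnNonneg.exists_isWeightedGram_sq_smul :
    ∀ {m : ℕ} {F : Matrix (Fin m) (Fin m) ℝ[X]}, Fᵀ = F → PosSemidefOnNonneg F →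
      ∃ b : ℝ[X], b ≠ 0 ∧ IsWeightedGram X (b ^ 2 • F)
  | 0, _, _, _ => ⟨1, one_ne_zero, 0, 0, Subsingleton.elim _ _⟩
  | k + 1, F, hsym, hF => by
    let e : Fin (k + 1) ≃ Fin k ⊕ Unit := finSuccEquivLast.trans (Equiv.optionEquivSumPUnit _)
    obtain ⟨b, hb, h⟩ := exists_isWeightedGram_sq_smul_of_sum_unit
      (fun _ hG hGF => exists_isWeightedGram_sq_smul hG hGF)
      (by rw [transpose_submatrix, hsym]) (hF.submatrix e.symm)
    refine ⟨b, hb, ?_⟩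
    simpa [submatrix_smul, submatrix_submatrix] using h.submatrix e

end Matrix

theorem psd_on_halfline_iff (m : ℕ)
    (F : Matrix (Fin m) (Fin m) (Polynomial ℝ)) (hsym : Fᵀ = F) :
    (∀ x : ℝ, 0 ≤ x → ∀ u : Fin m → ℝ,
        0 ≤ u ⬝ᵥ (F.map (fun p => p.eval x)).mulVec u) ↔
    (∃ b : Polynomial ℝ, b ≠ 0 ∧
      ∃ U V : Matrix (Fin m) (Fin m) (Polynomial ℝ),
        b ^ 2 • F = Uᵀ * U + (Polynomial.X : Polynomial ℝ) • (Vᵀ * V)) :=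
  ⟨PosSemidefOnNonneg.exists_isWeightedGram_sq_smul hsym,
    fun ⟨_, hb, h⟩ => PosSemidefOnNonneg.of_isWeightedGram hb h⟩
end

section
/- A diagonal univariate polynomial matrix D = diag(d₁,…,d_m) is positive semidefinite at every x ∈ [a,b] (with a < b) if and only if there exist diagonal polynomial matrices A₁, A₂, A₃, A₄ ∈ ℝ[x]^{m×m} such that D(x) = (x−a)·A₁(x)ᵀA₁(x) + (b−x)·A₂(x)ᵀA₂(x) + A₃(x)ᵀA₃(x) + (b−x)(x−a)·A₄(x)ᵀA₄(x). -/
/-!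
By Brahmagupta's identity the polynomials `p ^ 2 + g * q ^ 2`, for `g = (b - X) * (X - a)`, are
closed under multiplication. A polynomial that is nonnegative on `[a, b]` is a product of a
nonnegative constant and of factors of such a form: `X - r` with `r ≤ a`, `r - X` with `b ≤ r`,
`(X - r) ^ 2` for a root `r` inside `(a, b)` (which has even multiplicity), and positive definite
quadratics. Hence each `dᵢ` is `pᵢ ^ 2 + g * qᵢ ^ 2`, which is the required representation with
`A₁ = A₂ = 0`.
-/

open Matrix Polynomial

def IsSqAddMulSq {R : Type*} [CommRing R] (g f : R) : Prop :=
  ∃ p q : R, f = p ^ 2 + g * q ^ 2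

namespace IsSqAddMulSq

variable {R : Type*} [CommRing R] {g f f' : R}

theorem sq (g p : R) : IsSqAddMulSq g (p ^ 2) := ⟨p, 0, by ring⟩

theorem mul (hf : IsSqAddMulSq g f) (hf' : IsSqAddMulSq g f') : IsSqAddMulSq g (f * f') := by
  obtain ⟨p, q, rfl⟩ := hf
  obtain ⟨p', q', rfl⟩ := hf'
  exact ⟨p * p' + g * q * q', p * q' - q * p', by ring⟩

theorem of_C_mul {g f : ℝ[X]} {c : ℝ} (hc : 0 < c) (h : IsSqAddMulSq g (C c * f)) :
    IsSqAddMulSq g f := by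
  convert (sq g (C √c⁻¹)).mul h using 1
  rw [← C_pow, Real.sq_sqrt (inv_nonneg.mpr hc.le), ← mul_assoc, ← C_mul,
    inv_mul_cancel₀ hc.ne', C_1, one_mul]

theorem eval_nonneg {g f : ℝ[X]} (h : IsSqAddMulSq g f) {x : ℝ} (hg : 0 ≤ g.eval x) :
    0 ≤ f.eval x := by
  obtain ⟨p, q, rfl⟩ := h
  simp only [eval_add, eval_mul, eval_pow]
  positivity

end IsSqAddMulSq

theorem nonneg_Icc_of_nonneg_Ioo {f : ℝ → ℝ} (hf : Continuous f) {a b : ℝ} (hab : a < b)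
    (h : ∀ x ∈ Set.Ioo a b, 0 ≤ f x) : ∀ x ∈ Set.Icc a b, 0 ≤ f x := by
  rw [← closure_Ioo hab.ne]
  exact (isClosed_le continuous_const hf).closure_subset_iff.mpr h

theorem Polynomial.eval_nonneg_of_eval_mul_nonneg_s10 {h w : ℝ[X]} (hh : h ≠ 0) {a b : ℝ}
    (hh_nonneg : ∀ x ∈ Set.Ioo a b, 0 ≤ h.eval x) (hhw : ∀ x ∈ Set.Ioo a b, 0 ≤ (h * w).eval x) :
    ∀ x ∈ Set.Ioo a b, 0 ≤ w.eval x := by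
  by_contra! ⟨x, hx, hwx⟩
  -- otherwise `h` vanishes on the nonempty open set where `w < 0`
  obtain ⟨l, u, hlu, hsub⟩ :=
    (isOpen_Ioo.inter (isOpen_lt w.continuous continuous_const)).exists_Ioo_subset ⟨x, hx, hwx⟩
  refine hh (eq_zero_of_infinite_isRoot h ((Set.Ioo_infinite hlu).mono fun y hy => ?_))
  obtain ⟨hy, hwy : w.eval y < 0⟩ := hsub hy
  have := hhw y hy
  rw [eval_mul] at this
  exact le_antisymm (nonpos_of_mul_nonneg_left this hwy) (hh_nonneg y hy)

section Interval

variable {a b : ℝ}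

-- `(X - s) ^ 2 + (b - X) * (X - a)` is linear, and a multiple of `X - r` iff
-- `(s - r) ^ 2 = (a - r) * (b - r)`
theorem isSqAddMulSq_X_sub_C (hab : a < b) {r : ℝ} (hr : r ≤ a) :
    IsSqAddMulSq ((C b - X) * (X - C a)) (X - C r) := by
  set t := √((a - r) * (b - r))
  have ht : t ^ 2 = (a - r) * (b - r) := Real.sq_sqrt (by nlinarith)
  refine IsSqAddMulSq.of_C_mul (c := a + b - 2 * r + 2 * t)
    (by linarith [Real.sqrt_nonneg ((a - r) * (b - r))]) ⟨X - C (r - t), 1, ?_⟩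
  refine Polynomial.funext fun x => ?_
  simp only [eval_mul, eval_add, eval_sub, eval_pow, eval_C, eval_X, eval_one]
  linear_combination -ht

theorem isSqAddMulSq_C_sub_X (hab : a < b) {r : ℝ} (hr : b ≤ r) :
    IsSqAddMulSq ((C b - X) * (X - C a)) (C r - X) := by
  set t := √((r - a) * (r - b))
  have ht : t ^ 2 = (r - a) * (r - b) := Real.sq_sqrt (by nlinarith)
  refine IsSqAddMulSq.of_C_mul (c := 2 * r + 2 * t - a - b)
    (by linarith [Real.sqrt_nonneg ((r - a) * (r - b))]) ⟨X - C (r + t), 1, ?_⟩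
  refine Polynomial.funext fun x => ?_
  simp only [eval_mul, eval_add, eval_sub, eval_pow, eval_C, eval_X, eval_one]
  linear_combination -ht

theorem isSqAddMulSq_sq_add_C (hab : a < b) (u v : ℝ) :
    IsSqAddMulSq ((C b - X) * (X - C a)) ((X - C u) ^ 2 + C (v ^ 2)) := by
  set m := (a + b) / 2
  set ρ := (b - a) / 2
  have hρ : 0 < ρ := by simp only [ρ]; linarith
  -- with `s = (1 - τ) * u + τ * m`, the pencil
  -- `(1 - τ) * ((X - u) ^ 2 + v ^ 2) - τ * (b - X) * (X - a)` equals `(X - s) ^ 2 + ψ τ`,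
  -- and `ψ` changes sign on `[0, 1]`
  set ψ : ℝ → ℝ := fun τ => (1 - τ) * (τ * (u - m) ^ 2 + v ^ 2) - τ * ρ ^ 2
  obtain ⟨τ, ⟨hτ0, hτ1⟩, hψ⟩ : ∃ τ ∈ Set.Icc (0 : ℝ) 1, ψ τ = 0 :=
    intermediate_value_Icc' zero_le_one (by fun_prop)
      ⟨by simp only [ψ]; nlinarith, by simp only [ψ]; nlinarith [sq_nonneg v]⟩
  have hτ1 : τ < 1 := hτ1.lt_of_ne (by rintro rfl; simp only [ψ] at hψ; nlinarith)
  refine IsSqAddMulSq.of_C_mul (c := 1 - τ) (by linarith)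
    ⟨X - C ((1 - τ) * u + τ * m), C √τ, ?_⟩
  refine Polynomial.funext fun x => ?_
  simp only [eval_mul, eval_add, eval_sub, eval_pow, eval_C, eval_X, Real.sq_sqrt hτ0]
  linear_combination hψ

theorem Polynomial.sq_X_sub_C_dvd_of_isRoot {Q : ℝ[X]} {r : ℝ} (hr : r ∈ Set.Ioo a b)
    (hQ : ∀ x ∈ Set.Icc a b, 0 ≤ Q.eval x) (hroot : Q.IsRoot r) : (X - C r) ^ 2 ∣ Q := by
  obtain ⟨Q₁, rfl⟩ := dvd_iff_isRoot.mpr hroot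
  have hQ₁ : ∀ x ∈ Set.Icc a b, 0 ≤ (x - r) * Q₁.eval x := by simpa using hQ
  -- `Q₁` is nonnegative right of `r` and nonpositive left of it
  have h_right : 0 ≤ Q₁.eval r :=
    nonneg_Icc_of_nonneg_Ioo Q₁.continuous hr.2 (fun x hx =>
      nonneg_of_mul_nonneg_right (hQ₁ x ⟨by linarith [hr.1, hx.1], hx.2.le⟩) (by linarith [hx.1]))
      r ⟨le_rfl, hr.2.le⟩
  have h_left : 0 ≤ -Q₁.eval r :=
    nonneg_Icc_of_nonneg_Ioo (f := fun x => -Q₁.eval x) Q₁.continuous.neg hr.1 (fun x hx => by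
      have := hQ₁ x ⟨hx.1.le, by linarith [hr.2, hx.2]⟩
      nlinarith [hx.2])
      r ⟨hr.1.le, le_rfl⟩
  rw [sq]
  exact mul_dvd_mul_left _ (dvd_iff_isRoot.mpr (le_antisymm (by linarith) h_right))

theorem exists_isSqAddMulSq_dvd_of_isRoot (hab : a < b) {Q : ℝ[X]}
    (hQ : ∀ x ∈ Set.Icc a b, 0 ≤ Q.eval x) {r : ℝ} (hroot : Q.IsRoot r) :
    ∃ h, IsSqAddMulSq ((C b - X) * (X - C a)) h ∧ 0 < h.natDegree ∧ h ∣ Q := by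
  have hdvd : X - C r ∣ Q := dvd_iff_isRoot.mpr hroot
  rcases le_or_gt r a with hra | hra
  · exact ⟨X - C r, isSqAddMulSq_X_sub_C hab hra, by simp, hdvd⟩
  rcases le_or_gt b r with hbr | hbr
  · refine ⟨C r - X, isSqAddMulSq_C_sub_X hab hbr, ?_, ?_⟩
    · rw [← neg_sub, natDegree_neg]; simp
    · rwa [← neg_sub, neg_dvd]
  · exact ⟨(X - C r) ^ 2, IsSqAddMulSq.sq _ _, by simp,
      Polynomial.sq_X_sub_C_dvd_of_isRoot ⟨hra, hbr⟩ hQ hroot⟩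

theorem exists_isSqAddMulSq_dvd (hab : a < b) {Q : ℝ[X]} (hQ_deg : 0 < Q.natDegree)
    (hQ : ∀ x ∈ Set.Icc a b, 0 ≤ Q.eval x) :
    ∃ h, IsSqAddMulSq ((C b - X) * (X - C a)) h ∧ 0 < h.natDegree ∧ h ∣ Q := by
  obtain ⟨z, hz⟩ :=
    IsAlgClosed.exists_aeval_eq_zero ℂ Q (natDegree_pos_iff_degree_pos.mp hQ_deg).ne'
  by_cases him : z.im = 0
  · refine exists_isSqAddMulSq_dvd_of_isRoot hab hQ (r := z.re) ?_
    have hz_real : z = algebraMap ℝ ℂ z.re := Complex.ext rfl (by simp [him])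
    rw [hz_real, aeval_algebraMap_apply_eq_algebraMap_eval] at hz
    simpa using hz
  · refine ⟨_, isSqAddMulSq_sq_add_C hab z.re z.im, ?_, ?_⟩
    · have : ((X - C z.re) ^ 2 + C (z.im ^ 2)).natDegree = 2 := by compute_degree!
      omega
    · convert Q.quadratic_dvd_of_aeval_eq_zero_im_ne_zero hz him using 1
      rw [Complex.sq_norm, Complex.normSq_apply]
      simp only [C_add, C_mul, C_pow, C_ofNat]
      ring

theorem isSqAddMulSq_of_nonneg_Icc (hab : a < b) {Q : ℝ[X]}
    (hQ : ∀ x ∈ Set.Icc a b, 0 ≤ Q.eval x) : IsSqAddMulSq ((C b - X) * (X - C a)) Q := by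
  induction hn : Q.natDegree using Nat.strong_induction_on generalizing Q with
  | _ n ih =>
  rcases Nat.eq_zero_or_pos n with rfl | hn_pos
  · rw [eq_C_of_natDegree_eq_zero hn] at hQ ⊢
    have hc : 0 ≤ Q.coeff 0 := by simpa using hQ a ⟨le_rfl, hab.le⟩
    refine ⟨C √(Q.coeff 0), 0, ?_⟩
    rw [← C_pow, Real.sq_sqrt hc]
    ring
  obtain ⟨h, hh, hh_deg, w, rfl⟩ := exists_isSqAddMulSq_dvd hab (hn ▸ hn_pos) hQ
  have hw : w ≠ 0 := by rintro rfl; rw [mul_zero, natDegree_zero] at hn; omega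
  have hh_nonneg : ∀ x ∈ Set.Icc a b, 0 ≤ h.eval x := fun x hx =>
    hh.eval_nonneg <| by
      simp only [eval_mul, eval_sub, eval_C, eval_X]; nlinarith [hx.1, hx.2]
  have hw_nonneg : ∀ x ∈ Set.Icc a b, 0 ≤ w.eval x :=
    nonneg_Icc_of_nonneg_Ioo w.continuous hab
      (eval_nonneg_of_eval_mul_nonneg_s10 (ne_zero_of_natDegree_gt hh_deg)
        (fun x hx => hh_nonneg x (Set.Ioo_subset_Icc_self hx))
        (fun x hx => hQ x (Set.Ioo_subset_Icc_self hx)))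
  have hdeg : h.natDegree + w.natDegree = n := by
    rw [← hn, natDegree_mul (ne_zero_of_natDegree_gt hh_deg) hw]
  exact hh.mul (ih w.natDegree (by omega) hw_nonneg rfl)

end Interval

theorem Matrix.forall_dotProduct_diagonal_mulVec_nonneg_iff {n R : Type*} [Fintype n]
    [DecidableEq n] [CommRing R] [LinearOrder R] [IsStrictOrderedRing R] {e : n → R} :
    (∀ u : n → R, 0 ≤ u ⬝ᵥ diagonal e *ᵥ u) ↔ ∀ i, 0 ≤ e i := by
  refine ⟨fun h i => by simpa using h (Pi.single i 1), fun h u => ?_⟩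
  simp only [dotProduct, mulVec_diagonal]
  exact Finset.sum_nonneg fun i _ => by nlinarith [h i, mul_self_nonneg (u i)]

theorem diag_psd_on_interval_iff (m : ℕ) (a b : ℝ) (hab : a < b)
    (d : Fin m → Polynomial ℝ) :
    (∀ x : ℝ, x ∈ Set.Icc a b → ∀ u : Fin m → ℝ,
        0 ≤ u ⬝ᵥ ((Matrix.diagonal d).map (fun p => p.eval x)).mulVec u) ↔
    (∃ a1 a2 a3 a4 : Fin m → Polynomial ℝ,
        Matrix.diagonal d =
          ((X : Polynomial ℝ) - C a) • ((Matrix.diagonal a1)ᵀ * Matrix.diagonal a1) +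
          (C b - (X : Polynomial ℝ)) • ((Matrix.diagonal a2)ᵀ * Matrix.diagonal a2) +
          (Matrix.diagonal a3)ᵀ * Matrix.diagonal a3 +
          ((C b - (X : Polynomial ℝ)) * ((X : Polynomial ℝ) - C a)) •
            ((Matrix.diagonal a4)ᵀ * Matrix.diagonal a4)) := by
  simp only [diagonal_map (eval_zero (x := _)), forall_dotProduct_diagonal_mulVec_nonneg_iff,
    diagonal_transpose, diagonal_mul_diagonal, ← diagonal_smul, diagonal_add,
    diagonal_injective.eq_iff, funext_iff, Pi.smul_apply, smul_eq_mul]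
  constructor
  · intro hd
    choose p q hpq using fun i => isSqAddMulSq_of_nonneg_Icc hab fun x hx => hd x hx i
    exact ⟨0, 0, p, q, fun i => by rw [hpq i]; simp only [Pi.zero_apply]; ring⟩
  · rintro ⟨a1, a2, a3, a4, hd⟩ x ⟨hax, hxb⟩ i
    rw [hd i]
    simp only [eval_add, eval_mul, eval_sub, eval_X, eval_C]
    have hxa := sub_nonneg.mpr hax
    have hbx := sub_nonneg.mpr hxb
    exact add_nonneg (add_nonneg (add_nonneg (mul_nonneg hxa (mul_self_nonneg _))
      (mul_nonneg hbx (mul_self_nonneg _))) (mul_self_nonneg _))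
      (mul_nonneg (mul_nonneg hbx hxa) (mul_self_nonneg _))
end

section
/- Let F ∈ S^m(ℝ[x]) and a < b real. Then F(x) is positive semidefinite for all x ∈ [a,b] if and only if there exist a nonzero polynomial p ∈ ℝ[x] and polynomial matrices U₁, U₂, U₃, U₄ ∈ ℝ[x]^{m×m} such that p(x)²·F(x) = (x−a)·U₁(x)ᵀU₁(x) + (b−x)·U₂(x)ᵀU₂(x) + U₃(x)ᵀU₃(x) + (b−x)(x−a)·U₄(x)ᵀU₄(x). -/
set_option maxHeartbeats 2000000

open Matrix Polynomial


/-- `Rep4 g₁ g₂ f`: f is a weighted combination of single squares with weights 1,g₁,g₂,g₁g₂. -/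
def Rep4 {R : Type*} [CommRing R] (g₁ g₂ f : R) : Prop :=
  ∃ A B C D : R, f = C^2 + g₁*A^2 + g₂*B^2 + g₁*g₂*D^2

theorem Rep4.mul {R : Type*} [CommRing R] {g₁ g₂ f h : R}
    (hf : Rep4 g₁ g₂ f) (hh : Rep4 g₁ g₂ h) : Rep4 g₁ g₂ (f * h) := by
  obtain ⟨A1, B1, C1, D1, rfl⟩ := hf
  obtain ⟨A2, B2, C2, D2, rfl⟩ := hh
  exact ⟨C1*A2 + A1*C2 + g₂*(B1*D2 - D1*B2),
         C1*B2 + B1*C2 + g₁*(D1*A2 - A1*D2),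
         C1*C2 - g₁*A1*A2 - g₂*B1*B2 - g₁*g₂*D1*D2,
         C1*D2 + D1*C2 + A1*B2 - B1*A2, by ring⟩

theorem Rep4.sq {R : Type*} [CommRing R] (g₁ g₂ s : R) : Rep4 g₁ g₂ (s^2) :=
  ⟨0,0,s,0, by ring⟩

theorem Rep4.smul_sq {R : Type*} [CommRing R] {g₁ g₂ f : R} (s : R) (hf : Rep4 g₁ g₂ f) :
    Rep4 g₁ g₂ (s^2 * f) := (Rep4.sq g₁ g₂ s).mul hf

/-- Representability over ℝ[X] w.r.t. interval [a,b]. -/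
def RepI (a b : ℝ) (f : ℝ[X]) : Prop := Rep4 ((X : ℝ[X]) - C a) (C b - X) f

theorem RepI.const {a b : ℝ} {c : ℝ} (hc : 0 ≤ c) : RepI a b (C c) :=
  ⟨0, 0, C (Real.sqrt c), 0, by
    have h : (C (Real.sqrt c) : ℝ[X])^2 = C c := by rw [← C_pow, Real.sq_sqrt hc]
    linear_combination -h⟩

theorem RepI.lin_left {a b r : ℝ} (hr : r ≤ a) : RepI a b ((X : ℝ[X]) - C r) :=
  ⟨1, 0, C (Real.sqrt (a - r)), 0, by
    have : Real.sqrt (a-r) ^ 2 = a - r := Real.sq_sqrt (by linarith)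
    simp only [← C_pow, this]
    rw [C_sub]; ring⟩

theorem RepI.lin_right {a b r : ℝ} (hr : b ≤ r) : RepI a b (C r - (X : ℝ[X])) :=
  ⟨0, 1, C (Real.sqrt (r - b)), 0, by
    have : Real.sqrt (r-b) ^ 2 = r - b := Real.sq_sqrt (by linarith)
    simp only [← C_pow, this]
    rw [C_sub]; ring⟩

theorem RepI.quad {a b e c : ℝ} (hab : a < b) (hc : 0 ≤ c) :
    RepI a b (((X : ℝ[X]) + C e)^2 + C c) := by
  set d := Real.sqrt (c / (b - a)) with hd
  refine ⟨C d, C d, X + C e, 0, ?_⟩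
  have hd2 : d^2 = c / (b-a) := Real.sq_sqrt (by have := sub_pos.2 hab; positivity)
  have : ((X : ℝ[X]) - C a) * (C d)^2 + (C b - X) * (C d)^2 = C c := by
    have : ((X : ℝ[X]) - C a) * (C d)^2 + (C b - X) * (C d)^2 = C ((b-a) * d^2) := by
      simp only [← C_pow, C_sub, C_mul]; ring
    rw [this, hd2, mul_div_cancel₀]
    exact sub_ne_zero.2 hab.ne'
  linear_combination -this

theorem eval_nonneg_closure {p : ℝ[X]} {s : Set ℝ} (hs : ∀ x ∈ s, 0 ≤ p.eval x)
    {x : ℝ} (hx : x ∈ closure s) : 0 ≤ p.eval x := by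
  have h1 : closure s ⊆ (fun y => p.eval y) ⁻¹' Set.Ici 0 :=
    closure_minimal (fun y hy => hs y hy) (isClosed_Ici.preimage p.continuous)
  exact h1 hx

theorem monic_quad_eq {g : ℝ[X]} (hm : g.Monic) (h2 : g.natDegree = 2) :
    g = ((X : ℝ[X]) + C (g.coeff 1 / 2))^2 + C (g.coeff 0 - (g.coeff 1)^2/4) := by
  have hdg : degree g = degree ((X:ℝ[X])^2) := by
    rw [degree_X_pow, degree_eq_natDegree hm.ne_zero, h2]
  have hdeg : degree (g - X^2) < 2 := by
    have := degree_sub_lt hdg hm.ne_zero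
      (by rw [hm.leadingCoeff, (monic_X_pow 2).leadingCoeff])
    rw [hdg] at this; simpa using this
  have hq : g - X^2 = C ((g - X^2).coeff 1) * X + C ((g - X^2).coeff 0) := by
    by_cases h0 : g - X^2 = 0
    · rw [h0]; simp
    · refine eq_X_add_C_of_natDegree_le_one ?_
      have h1 : (g - X^2).natDegree < 2 := by
        rw [natDegree_lt_iff_degree_lt h0]; exact_mod_cast hdeg
      omega
  have hc1 : (g - X^2).coeff 1 = g.coeff 1 := by simp [coeff_X_pow]
  have hc0 : (g - X^2).coeff 0 = g.coeff 0 := by simp [coeff_X_pow]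
  rw [hc1, hc0] at hq
  set β := g.coeff 1 with hβ
  set γ := g.coeff 0 with hγ
  have hg : g = X^2 + C β * X + C γ := by linear_combination hq
  have e1 : (C (β / 2) : ℝ[X]) * 2 = C β := by
    rw [show (2:ℝ[X]) = C 2 from (map_ofNat C 2).symm, ← C_mul]; norm_num
  have e2 : (C (γ - β^2/4) : ℝ[X]) = C γ - (C (β / 2))^2 := by
    rw [← C_pow, ← C_sub]; congr 1; ring
  rw [hg, e2]; linear_combination (-(X : ℝ[X])) * e1

/-- Irreducible polynomials have no roots when degree ≥ 2. -/
theorem no_root_of_irreducible {g : ℝ[X]} (hirr : Irreducible g) (h2 : 2 ≤ g.natDegree)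
    (r : ℝ) : ¬ g.IsRoot r := by
  intro hroot
  obtain ⟨k, hk⟩ := (dvd_iff_isRoot).2 hroot
  rcases hirr.isUnit_or_isUnit hk with h | h
  · exact (not_isUnit_of_natDegree_pos _ (by simp [natDegree_X_sub_C])) h
  · obtain ⟨c, hcu, hck⟩ := Polynomial.isUnit_iff.1 h
    rw [hk, ← hck, natDegree_mul (X_sub_C_ne_zero r) (C_ne_zero.2 hcu.ne_zero),
      natDegree_X_sub_C, natDegree_C] at h2
    omega

theorem repI_of_nonneg {a b : ℝ} (hab : a < b) (f : ℝ[X])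
    (hf : ∀ x ∈ Set.Icc a b, 0 ≤ f.eval x) : RepI a b f := by
  suffices H : ∀ n : ℕ, ∀ f : ℝ[X], f.natDegree ≤ n →
      (∀ x ∈ Set.Icc a b, 0 ≤ f.eval x) → RepI a b f from
    H f.natDegree f le_rfl hf
  intro n
  induction n using Nat.strong_induction_on with
  | _ n IH =>
  intro f hdeg hf
  by_cases h0 : f.natDegree = 0
  · obtain ⟨c, rfl⟩ := natDegree_eq_zero.1 h0
    exact RepI.const (by simpa using hf a ⟨le_refl a, hab.le⟩)
  -- f nonconstant
  have hfne : f ≠ 0 := fun h => h0 (by simp [h])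
  have hnu : ¬ IsUnit f := not_isUnit_of_natDegree_pos f (Nat.pos_of_ne_zero h0)
  obtain ⟨g0, hg0irr, hg0dvd⟩ := WfDvdMonoid.exists_irreducible_factor hnu hfne
  -- monic irreducible factor g
  set g : ℝ[X] := g0 * C (g0.leadingCoeff)⁻¹ with hgdef
  have hlc : g0.leadingCoeff ≠ 0 := leadingCoeff_ne_zero.2 hg0irr.ne_zero
  have hgmonic : g.Monic := monic_mul_leadingCoeff_inv hg0irr.ne_zero
  have hunit : IsUnit (C (g0.leadingCoeff)⁻¹) := isUnit_C.2 (isUnit_iff_ne_zero.2 (inv_ne_zero hlc))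
  have hassoc : Associated g0 g := associated_mul_unit_right g0 _ hunit
  have hgirr : Irreducible g := hassoc.irreducible hg0irr
  have hgdvd : g ∣ f := hassoc.symm.dvd.trans hg0dvd
  obtain ⟨h, hfe⟩ := hgdvd
  have hgne : g ≠ 0 := hgmonic.ne_zero
  have hhne : h ≠ 0 := by rintro rfl; rw [mul_zero] at hfe; exact hfne hfe
  have hdegs : f.natDegree = g.natDegree + h.natDegree := by
    rw [hfe, natDegree_mul hgne hhne]
  have hgd2 : g.natDegree ≤ 2 := hgirr.natDegree_le_two
  have hgd1 : 0 < g.natDegree := hgirr.natDegree_pos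
  have hn1 : 1 ≤ n := le_trans (Nat.pos_of_ne_zero h0) hdeg
  rcases (by omega : g.natDegree = 1 ∨ g.natDegree = 2) with hgd | hgd
  · -- linear factor
    set r : ℝ := -g.coeff 0 with hrdef
    have hgr : g = X - C r := by
      rw [hgmonic.eq_X_add_C hgd, hrdef]; simp
    have hev : ∀ x : ℝ, f.eval x = (x - r) * h.eval x := by
      intro x; rw [hfe, hgr]; simp
    rcases le_or_gt r a with hra | hra
    · -- r ≤ a
      have hh : ∀ x ∈ Set.Icc a b, 0 ≤ h.eval x := by
        intro x hx
        refine eval_nonneg_closure (s := Set.Ioc a b) ?_ ?_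
        · intro y hy
          have h1 := hf y (Set.Ioc_subset_Icc_self hy)
          rw [hev y] at h1
          exact (mul_nonneg_iff_of_pos_left (by linarith [hy.1])).1 h1
        · rwa [closure_Ioc hab.ne]
      have hrep := IH (n-1) (by omega) h (by omega) hh
      rw [hfe, hgr]
      exact (RepI.lin_left hra).mul hrep
    rcases lt_or_ge r b with hrb | hrb
    · -- a < r < b : double root
      have hle : h.eval r ≤ 0 := by
        have h2 := eval_nonneg_closure (p := -h) (s := Set.Ico a r) (x := r) ?_ ?_
        · simpa using h2
        · intro y hy
          have h1 := hf y (Set.mem_Icc.2 ⟨hy.1, by linarith [hy.2]⟩)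
          rw [hev y] at h1
          simp only [eval_neg]
          nlinarith [hy.2]
        · rw [closure_Ico hra.ne]; exact ⟨hra.le, le_refl r⟩
      have hge : 0 ≤ h.eval r := by
        refine eval_nonneg_closure (s := Set.Ioc r b) ?_ ?_
        · intro y hy
          have h1 := hf y (Set.mem_Icc.2 ⟨by linarith [hy.1], hy.2⟩)
          rw [hev y] at h1
          exact (mul_nonneg_iff_of_pos_left (by linarith [hy.1])).1 h1
        · rw [closure_Ioc hrb.ne]; exact ⟨le_refl r, hrb.le⟩
      obtain ⟨h₂, hh2⟩ := dvd_iff_isRoot.2 (le_antisymm hle hge)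
      have hh2ne : h₂ ≠ 0 := by
        rintro rfl; rw [mul_zero] at hh2; exact hhne hh2
      have hf2 : f = (X - C r)^2 * h₂ := by rw [hfe, hgr, hh2]; ring
      have hev2 : ∀ x : ℝ, f.eval x = (x - r)^2 * h₂.eval x := by
        intro x; rw [hf2]; simp
      have hdeg2 : h₂.natDegree + 2 ≤ n := by
        have : f.natDegree = 2 + h₂.natDegree := by
          rw [hf2, natDegree_mul (pow_ne_zero 2 (X_sub_C_ne_zero r)) hh2ne,
            natDegree_pow, natDegree_X_sub_C]
        omega
      have hh₂ : ∀ x ∈ Set.Icc a b, 0 ≤ h₂.eval x := by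
        intro x hx
        rcases eq_or_ne x r with hxr | hxr
        · rw [hxr]
          refine eval_nonneg_closure (s := Set.Ioc r b) ?_ ?_
          · intro y hy
            have h1 := hf y (Set.mem_Icc.2 ⟨by linarith [hy.1], hy.2⟩)
            rw [hev2 y] at h1
            have hypos : (0:ℝ) < (y - r)^2 := by nlinarith [hy.1]
            exact (mul_nonneg_iff_of_pos_left hypos).1 h1
          · rw [closure_Ioc hrb.ne]; exact ⟨le_refl r, hrb.le⟩
        · have h1 := hf x hx
          rw [hev2 x] at h1
          have hxpos : (0:ℝ) < (x - r)^2 :=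
            lt_of_le_of_ne (sq_nonneg _) (Ne.symm (pow_ne_zero 2 (sub_ne_zero.2 hxr)))
          exact (mul_nonneg_iff_of_pos_left hxpos).1 h1
      have hrep := IH (n-2) (by omega) h₂ (by omega) hh₂
      rw [hf2]
      exact (Rep4.sq _ _ ((X : ℝ[X]) - C r)).mul hrep
    · -- b ≤ r
      have hh : ∀ x ∈ Set.Icc a b, 0 ≤ (-h).eval x := by
        intro x hx
        refine eval_nonneg_closure (s := Set.Ico a b) ?_ ?_
        · intro y hy
          have h1 := hf y (Set.Ico_subset_Icc_self hy)
          rw [hev y] at h1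
          simp only [eval_neg]
          nlinarith [hy.2]
        · rwa [closure_Ico hab.ne]
      have hrep := IH (n-1) (by omega) (-h) (by rw [natDegree_neg]; omega) hh
      have : f = (C r - X) * (-h) := by rw [hfe, hgr]; ring
      rw [this]
      exact (RepI.lin_right hrb).mul hrep
  · -- irreducible quadratic factor
    set e : ℝ := g.coeff 1 / 2 with hedef
    set c0 : ℝ := g.coeff 0 - (g.coeff 1)^2/4 with hc0def
    have hq : g = ((X : ℝ[X]) + C e)^2 + C c0 := monic_quad_eq hgmonic hgd
    have hnoroot := no_root_of_irreducible hgirr (by omega)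
    have hc0 : 0 < c0 := by
      by_contra hc
      push_neg at hc
      apply hnoroot (-e + Real.sqrt (-c0))
      have : Real.sqrt (-c0) ^ 2 = -c0 := Real.sq_sqrt (by linarith)
      simp only [IsRoot, hq, eval_add, eval_pow, eval_X, eval_C]
      rw [show -e + Real.sqrt (-c0) + e = Real.sqrt (-c0) by ring, this]; ring
    have hgpos : ∀ x : ℝ, 0 < g.eval x := by
      intro x
      rw [hq]
      simp only [eval_add, eval_pow, eval_X, eval_C]
      nlinarith [sq_nonneg (x + e)]
    have hh : ∀ x ∈ Set.Icc a b, 0 ≤ h.eval x := by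
      intro x hx
      have h1 := hf x hx
      rw [hfe, eval_mul] at h1
      exact (mul_nonneg_iff_of_pos_left (hgpos x)).1 h1
    have hrep := IH (n-2) (by omega) h (by omega) hh
    rw [hfe, hq]
    exact (RepI.quad hab hc0.le).mul hrep

theorem psd_forward (m : ℕ) (a b : ℝ) (hab : a < b)
    (F : Matrix (Fin m) (Fin m) (Polynomial ℝ)) (hsym : Fᵀ = F)
    (hpsd : ∀ x : ℝ, x ∈ Set.Icc a b → ∀ u : Fin m → ℝ,
        0 ≤ u ⬝ᵥ (F.map (fun p => p.eval x)).mulVec u) :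
    (∃ p : Polynomial ℝ, p ≠ 0 ∧
      ∃ U1 U2 U3 U4 : Matrix (Fin m) (Fin m) (Polynomial ℝ),
        p ^ 2 • F =
          ((X : Polynomial ℝ) - C a) • (U1ᵀ * U1) +
          (C b - (X : Polynomial ℝ)) • (U2ᵀ * U2) +
          U3ᵀ * U3 +
          ((C b - (X : Polynomial ℝ)) * ((X : Polynomial ℝ) - C a)) • (U4ᵀ * U4)) := by
  classical
  set K := FractionRing (Polynomial ℝ)
  set φ : ℝ[X] →+* K := algebraMap ℝ[X] K with hφdef
  have φinj : Function.Injective φ := IsFractionRing.injective (Polynomial ℝ) K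
  haveI : Invertible (2:K) := invertibleOfNonzero two_ne_zero
  set F' : Matrix (Fin m) (Fin m) K := F.map φ with hF'def
  have hsym' : F'ᵀ = F' := by
    rw [hF'def, ← Matrix.transpose_map, hsym]
  set B : LinearMap.BilinForm K (Fin m → K) := Matrix.toLinearMap₂' K F' with hBdef
  have happly : ∀ x y : Fin m → K, B x y = x ⬝ᵥ F' *ᵥ y := fun x y =>
    Matrix.toLinearMap₂'_apply' F' x y
  have hBsymm : LinearMap.IsSymm B := by
    refine ⟨fun x y => ?_⟩
    rw [RingHom.id_apply, happly, happly, dotProduct_mulVec, ← hsym', vecMul_transpose,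
      hsym', dotProduct_comm]
  obtain ⟨v0, hv0⟩ := LinearMap.BilinForm.exists_orthogonal_basis hBsymm
  set v := v0.reindex (finCongr (Module.finrank_fin_fun K)) with hvdef
  have hortho : ∀ i j : Fin m, i ≠ j → (v i) ⬝ᵥ F' *ᵥ (v j) = 0 := by
    intro i j hij
    have h1 := hv0 (i := ((finCongr (Module.finrank_fin_fun K))).symm i)
      (j := ((finCongr (Module.finrank_fin_fun K))).symm j)
      (fun h => hij (by simpa using congrArg (finCongr (Module.finrank_fin_fun K)) h))
    have h1' : B (v0 (((finCongr (Module.finrank_fin_fun K))).symm i))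
        (v0 (((finCongr (Module.finrank_fin_fun K))).symm j)) = 0 := h1
    rw [happly] at h1' 
    rw [hvdef]
    simpa [Module.Basis.reindex_apply] using h1'
  set d : Fin m → K := fun i => v i ⬝ᵥ F' *ᵥ v i with hddef
  set N : Matrix (Fin m) (Fin m) K := (Pi.basisFun K (Fin m)).toMatrix v with hNdef
  have hN : ∀ i j, N i j = v j i := by
    intro i j; rw [hNdef, Module.Basis.toMatrix_apply, Pi.basisFun_repr]
  have hdiag : Nᵀ * F' * N = diagonal d := by
    ext i j
    have hBij : (Nᵀ * F' * N) i j = v i ⬝ᵥ F' *ᵥ v j := by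
      simp only [Matrix.mul_apply, Matrix.transpose_apply, hN, dotProduct, mulVec,
        Finset.sum_mul, Finset.mul_sum]
      rw [Finset.sum_comm]
      exact Finset.sum_congr rfl fun k _ => by rw [Finset.sum_mul]; exact Finset.sum_congr rfl fun l _ => by ring
    rcases eq_or_ne i j with rfl | hij
    · rw [hBij, diagonal_apply_eq]
    · rw [hBij, diagonal_apply_ne _ hij, hortho i j hij]
  letI : Invertible N := (Pi.basisFun K (Fin m)).invertibleToMatrix v
  have hF' : F' = (⅟N)ᵀ * diagonal d * ⅟N := by
    have h1 : (⅟N)ᵀ * Nᵀ = 1 := by rw [← transpose_mul, mul_invOf_self, transpose_one]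
    have h2 : N * ⅟N = 1 := mul_invOf_self N
    have h3 : (⅟N)ᵀ * (Nᵀ * F' * N) * ⅟N = F' := by
      calc (⅟N)ᵀ * (Nᵀ * F' * N) * ⅟N
          = ((⅟N)ᵀ * Nᵀ) * F' * (N * ⅟N) := by simp only [Matrix.mul_assoc]
        _ = F' := by rw [h1, h2, Matrix.one_mul, Matrix.mul_one]
    rw [← h3, hdiag]
  -- clear denominators of v
  obtain ⟨qden, hq⟩ := IsLocalization.exist_integer_multiples (nonZeroDivisors ℝ[X])
    Finset.univ (fun p : Fin m × Fin m => v p.1 p.2)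
  set q : ℝ[X] := (qden : ℝ[X]) with hqdef
  have hqne : q ≠ 0 := nonZeroDivisors.ne_zero qden.2
  choose w hw using fun p : Fin m × Fin m => hq p (Finset.mem_univ p)
  have hw' : ∀ i k : Fin m, φ (w (i,k)) = φ q * v i k := by
    intro i k
    have h1 := hw (i,k)
    rw [Algebra.smul_def] at h1
    exact h1
  -- clear denominators of ⅟N
  obtain ⟨rden, hr⟩ := IsLocalization.exist_integer_multiples (nonZeroDivisors ℝ[X])
    Finset.univ (fun p : Fin m × Fin m => (⅟N) p.1 p.2)
  set r : ℝ[X] := (rden : ℝ[X]) with hrdef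
  have hrne : r ≠ 0 := nonZeroDivisors.ne_zero rden.2
  choose Pw hPw using fun p : Fin m × Fin m => hr p (Finset.mem_univ p)
  set P : Matrix (Fin m) (Fin m) ℝ[X] := fun i j => Pw (i,j) with hPdef
  have hP : ∀ i j, φ (P i j) = φ r * (⅟N) i j := by
    intro i j
    rw [hPdef]
    show φ (Pw (i,j)) = _
    have h1 := hPw (i,j)
    rw [Algebra.smul_def] at h1
    exact h1
  -- the diagonal numerators
  set e : Fin m → ℝ[X] := fun i => (fun k => w (i,k)) ⬝ᵥ F *ᵥ (fun k => w (i,k)) with hedef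
  have he : ∀ i, φ (e i) = φ q ^ 2 * d i := by
    intro i
    rw [hedef]
    show φ ((fun k => w (i,k)) ⬝ᵥ F *ᵥ (fun k => w (i,k))) = _
    rw [RingHom.map_dotProduct]
    have hmv : φ ∘ (F *ᵥ fun k => w (i,k)) = F' *ᵥ (φ ∘ fun k => w (i,k)) := by
      funext j; exact RingHom.map_mulVec φ F _ j
    rw [hmv]
    have hφw : (φ ∘ fun k => w (i,k)) = fun k => φ q * v i k := by
      funext k; exact hw' i k
    rw [hφw]
    have : (fun k => φ q * v i k) = φ q • (v i) := by funext k; simp [Algebra.smul_def]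
    rw [this, smul_dotProduct, mulVec_smul, dotProduct_smul, hddef]
    simp [smul_eq_mul]; ring
  have hnn : ∀ i, ∀ x ∈ Set.Icc a b, 0 ≤ (e i).eval x := by
    intro i x hx
    have : (e i).eval x = (fun k => (w (i,k)).eval x) ⬝ᵥ
        (F.map (fun p => p.eval x)) *ᵥ (fun k => (w (i,k)).eval x) := by
      rw [hedef]
      show (evalRingHom x) ((fun k => w (i,k)) ⬝ᵥ F *ᵥ (fun k => w (i,k))) = _
      rw [RingHom.map_dotProduct]
      have hmv : (evalRingHom x) ∘ (F *ᵥ fun k => w (i,k))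
          = (F.map (evalRingHom x)) *ᵥ ((evalRingHom x) ∘ fun k => w (i,k)) := by
        funext j; exact RingHom.map_mulVec _ F _ j
      rw [hmv]
      rfl
    rw [this]
    exact hpsd x hx _
  -- scalar representations
  have hreps : ∀ i, ∃ A B C D : ℝ[X], e i = C^2 + ((X:ℝ[X]) - Polynomial.C a)*A^2
      + (Polynomial.C b - X)*B^2
      + ((X:ℝ[X]) - Polynomial.C a)*(Polynomial.C b - X)*D^2 :=
    fun i => repI_of_nonneg hab (e i) (hnn i)
  choose A Bv Cv Dv hrep using hreps
  set g₁ : ℝ[X] := X - C a with hg1def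
  set g₂ : ℝ[X] := C b - X with hg2def
  set p : ℝ[X] := q * r with hpdef
  have hpne : p ≠ 0 := mul_ne_zero hqne hrne
  set U1 := diagonal A * P with hU1def
  set U2 := diagonal Bv * P with hU2def
  set U3 := diagonal Cv * P with hU3def
  set U4 := diagonal Dv * P with hU4def
  have expand : ∀ (G : Fin m → ℝ[X]),
      (diagonal G * P)ᵀ * (diagonal G * P) = Pᵀ * diagonal (fun i => G i * G i) * P := by
    intro G
    rw [transpose_mul, diagonal_transpose, Matrix.mul_assoc, ← Matrix.mul_assoc (diagonal G),
      diagonal_mul_diagonal, ← Matrix.mul_assoc]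
  have split : diagonal e = diagonal (fun i => Cv i * Cv i)
      + g₁ • diagonal (fun i => A i * A i)
      + g₂ • diagonal (fun i => Bv i * Bv i)
      + (g₂ * g₁) • diagonal (fun i => Dv i * Dv i) := by
    have hfun : e = fun i => Cv i * Cv i + g₁ * (A i * A i)
        + g₂ * (Bv i * Bv i) + g₂ * g₁ * (Dv i * Dv i) := by
      funext i; linear_combination hrep i
    rw [hfun, ← diagonal_smul, ← diagonal_smul, ← diagonal_smul,
      diagonal_add, diagonal_add, diagonal_add]
    apply congrArg diagonal
    funext i
    simp only [Pi.smul_apply, smul_eq_mul]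
  have KEY1 : g₁ • (U1ᵀ * U1) + g₂ • (U2ᵀ * U2) + U3ᵀ * U3 + (g₂ * g₁) • (U4ᵀ * U4)
      = Pᵀ * diagonal e * P := by
    rw [hU1def, hU2def, hU3def, hU4def, expand A, expand Bv, expand Cv, expand Dv, split]
    simp only [Matrix.mul_add, Matrix.add_mul, Matrix.mul_smul, Matrix.smul_mul]
    abel
  have mapinj : ∀ M₁ M₂ : Matrix (Fin m) (Fin m) ℝ[X], M₁.map φ = M₂.map φ → M₁ = M₂ := by
    intro M₁ M₂ h
    exact Matrix.ext fun i j => φinj (by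
      simpa [Matrix.map_apply] using congrArg (fun M => M i j) h)
  have hPmap : P.map φ = φ r • ⅟N := by
    ext i j; simp only [Matrix.map_apply, Matrix.smul_apply, smul_eq_mul]; exact hP i j
  have KEY2 : p ^ 2 • F = Pᵀ * diagonal e * P := by
    apply mapinj
    have lhs : (p ^ 2 • F).map φ = (φ p) ^ 2 • F' := by
      ext i j
      simp only [Matrix.map_apply, Matrix.smul_apply, smul_eq_mul, _root_.map_mul, map_pow, hF'def]
    have rhs : (Pᵀ * diagonal e * P).map φ
        = (P.map φ)ᵀ * diagonal (fun i => φ (e i)) * P.map φ := by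
      rw [Matrix.map_mul, Matrix.map_mul, Matrix.transpose_map,
        diagonal_map (map_zero φ)]
    rw [lhs, rhs, hPmap]
    have hde : diagonal (fun i => φ (e i)) = (φ q)^2 • diagonal d := by
      have : (fun i => φ (e i)) = ((φ q)^2 • d) := by
        funext i; rw [he i]; simp [smul_eq_mul]
      rw [this, diagonal_smul]
    rw [hde, transpose_smul]
    rw [Matrix.smul_mul, Matrix.mul_smul, Matrix.smul_mul, Matrix.mul_smul, Matrix.smul_mul]
    rw [← hF', smul_smul, smul_smul]
    congr 1
    rw [hpdef, _root_.map_mul]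
    ring
  exact ⟨p, hpne, U1, U2, U3, U4, by
    rw [KEY2, ← KEY1, hg1def, hg2def]⟩

theorem psd_backward (m : ℕ) (a b : ℝ) (hab : a < b)
    (F : Matrix (Fin m) (Fin m) (Polynomial ℝ))
    (p : Polynomial ℝ) (hp : p ≠ 0)
    (U1 U2 U3 U4 : Matrix (Fin m) (Fin m) (Polynomial ℝ))
    (hid : p ^ 2 • F =
          ((X : Polynomial ℝ) - C a) • (U1ᵀ * U1) +
          (C b - (X : Polynomial ℝ)) • (U2ᵀ * U2) +
          U3ᵀ * U3 +
          ((C b - (X : Polynomial ℝ)) * ((X : Polynomial ℝ) - C a)) • (U4ᵀ * U4)) :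
    ∀ x : ℝ, x ∈ Set.Icc a b → ∀ u : Fin m → ℝ,
        0 ≤ u ⬝ᵥ (F.map (fun q => q.eval x)).mulVec u := by
  intro x hx u
  set w : Fin m → ℝ[X] := fun i => C (u i) with hwdef
  set f : ℝ[X] := w ⬝ᵥ F *ᵥ w with hfdef
  -- quadratic form of a Gram matrix
  have hgram : ∀ U : Matrix (Fin m) (Fin m) ℝ[X],
      w ⬝ᵥ (Uᵀ * U) *ᵥ w = (U *ᵥ w) ⬝ᵥ (U *ᵥ w) := by
    intro U
    rw [← mulVec_mulVec, dotProduct_mulVec, vecMul_transpose]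
  have hsmul : ∀ (c : ℝ[X]) (M : Matrix (Fin m) (Fin m) ℝ[X]),
      w ⬝ᵥ (c • M) *ᵥ w = c * (w ⬝ᵥ M *ᵥ w) := by
    intro c M
    rw [smul_mulVec, dotProduct_smul, smul_eq_mul]
  have hscal : p^2 * f =
      ((X : ℝ[X]) - C a) * ((U1 *ᵥ w) ⬝ᵥ (U1 *ᵥ w)) +
      (C b - X) * ((U2 *ᵥ w) ⬝ᵥ (U2 *ᵥ w)) +
      ((U3 *ᵥ w) ⬝ᵥ (U3 *ᵥ w)) +
      ((C b - X) * ((X : ℝ[X]) - C a)) * ((U4 *ᵥ w) ⬝ᵥ (U4 *ᵥ w)) := by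
    have h1 := congrArg (fun M : Matrix (Fin m) (Fin m) ℝ[X] => w ⬝ᵥ M *ᵥ w) hid
    simp only [add_mulVec, dotProduct_add] at h1
    rw [hsmul, hsmul, hsmul, hsmul, hgram, hgram, hgram, hgram] at h1
    exact h1
  -- evaluation transfer
  have hevdot : ∀ (z : Fin m → ℝ[X]) (y : ℝ),
      (z ⬝ᵥ z).eval y = (fun k => (z k).eval y) ⬝ᵥ (fun k => (z k).eval y) := by
    intro z y
    exact RingHom.map_dotProduct (evalRingHom y) z z
  have hdotnn : ∀ (z : Fin m → ℝ[X]) (y : ℝ), 0 ≤ (z ⬝ᵥ z).eval y := by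
    intro z y
    rw [hevdot]
    exact Finset.sum_nonneg fun k _ => mul_self_nonneg _
  have hfev : ∀ y : ℝ, f.eval y = u ⬝ᵥ (F.map (fun q => q.eval y)).mulVec u := by
    intro y
    rw [hfdef]
    show (evalRingHom y) (w ⬝ᵥ F *ᵥ w) = _
    rw [RingHom.map_dotProduct]
    have hmv : (evalRingHom y) ∘ (F *ᵥ w) = (F.map (evalRingHom y)) *ᵥ ((evalRingHom y) ∘ w) := by
      funext j; exact RingHom.map_mulVec _ F _ j
    rw [hmv]
    have : (evalRingHom y) ∘ w = u := by funext k; simp [hwdef]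
    rw [this]
    rfl
  -- f is nonneg on the set where p doesn't vanish
  set s : Set ℝ := {y ∈ Set.Icc a b | p.eval y ≠ 0} with hsdef
  have hnn : ∀ y ∈ s, 0 ≤ f.eval y := by
    rintro y ⟨hy, hpy⟩
    have h1 := congrArg (fun g => g.eval y) hscal
    simp only [eval_mul, eval_add, eval_pow, eval_sub, eval_X, eval_C] at h1
    have hppos : 0 < (p.eval y)^2 := by positivity
    have hrhs : 0 ≤ (p.eval y)^2 * f.eval y := by
      rw [h1]
      have n1 := hdotnn (U1 *ᵥ w) y
      have n2 := hdotnn (U2 *ᵥ w) y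
      have n3 := hdotnn (U3 *ᵥ w) y
      have n4 := hdotnn (U4 *ᵥ w) y
      have hy1 : 0 ≤ y - a := by linarith [hy.1]
      have hy2 : 0 ≤ b - y := by linarith [hy.2]
      positivity
    exact (mul_nonneg_iff_of_pos_left hppos).1 hrhs
  -- x is in the closure of s
  have hcl : x ∈ closure s := by
    rw [mem_closure_iff_nhds]
    intro t ht
    obtain ⟨ε, hε, hball⟩ := Metric.mem_nhds_iff.1 ht
    set δ : ℝ := min (ε/2) ((b-a)/2) with hδdef
    have hδpos : 0 < δ := lt_min (by linarith) (by linarith)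
    set c : ℝ := max a (x - δ) with hcdef
    set dd : ℝ := min b (x + δ) with hdddef
    have hcd : c < dd := by
      apply max_lt
      · exact lt_min hab (by linarith [hx.1])
      · exact lt_min (by linarith [hx.2]) (by linarith)
    have hfin : Set.Finite {y : ℝ | p.IsRoot y} := Polynomial.finite_setOf_isRoot hp
    have hinf : (Set.Icc c dd).Infinite := Set.Icc_infinite hcd
    obtain ⟨y, hy⟩ := (hinf.diff hfin).nonempty
    refine ⟨y, ?_, ?_⟩
    · apply hball
      rw [Metric.mem_ball, Real.dist_eq]
      have h1 : c ≤ y := hy.1.1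
      have h2 : y ≤ dd := hy.1.2
      have h3 : x - δ ≤ c := le_max_right _ _
      have h4 : dd ≤ x + δ := min_le_right _ _
      have h5 : δ ≤ ε/2 := min_le_left _ _
      rw [abs_sub_lt_iff]
      constructor <;> linarith
    · refine ⟨⟨?_, ?_⟩, ?_⟩
      · exact le_trans (le_max_left _ _) hy.1.1
      · exact le_trans hy.1.2 (min_le_left _ _)
      · exact hy.2
  have := eval_nonneg_closure hnn hcl
  rwa [hfev x] at this


theorem psd_on_interval_iff (m : ℕ) (a b : ℝ) (hab : a < b)
    (F : Matrix (Fin m) (Fin m) (Polynomial ℝ)) (hsym : Fᵀ = F) :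
    (∀ x : ℝ, x ∈ Set.Icc a b → ∀ u : Fin m → ℝ,
        0 ≤ u ⬝ᵥ (F.map (fun p => p.eval x)).mulVec u) ↔
    (∃ p : Polynomial ℝ, p ≠ 0 ∧
      ∃ U1 U2 U3 U4 : Matrix (Fin m) (Fin m) (Polynomial ℝ),
        p ^ 2 • F =
          ((X : Polynomial ℝ) - C a) • (U1ᵀ * U1) +
          (C b - (X : Polynomial ℝ)) • (U2ᵀ * U2) +
          U3ᵀ * U3 +
          ((C b - (X : Polynomial ℝ)) * ((X : Polynomial ℝ) - C a)) • (U4ᵀ * U4)) := by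
  constructor
  · exact fun hpsd => psd_forward m a b hab F hsym hpsd
  · rintro ⟨p, hp, U1, U2, U3, U4, hid⟩
    exact psd_backward m a b hab F p hp U1 U2 U3 U4 hid
end

section
/- Let F ∈ S^m(ℝ[x₁,…,xₙ]) be a symmetric polynomial matrix and suppose there exist a nonzero polynomial b, polynomial matrices X₊, X₋ ∈ ℝ[x]^{m×m} and polynomials d₁,…,d_m with X₊X₋ = X₋X₊ = bI, b²F = X₊·diag(d₁,…,d_m)·X₊ᵀ, and diag(d₁,…,d_m) = X₋FX₋ᵀ. Then F(x) is positive semidefinite for all x ∈ ℝⁿ if and only if dⱼ(x) ≥ 0 for all x ∈ ℝⁿ and all j = 1,…,m. -/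
open Matrix MvPolynomial

lemma aux_dense {n : ℕ} (b : MvPolynomial (Fin n) ℝ) (hb : b ≠ 0)
    (s : (Fin n → ℝ) → ℝ) (hs : Continuous s)
    (h : ∀ x, eval x b ≠ 0 → 0 ≤ s x) : ∀ x, 0 ≤ s x := by
  by_contra hc
  push_neg at hc
  obtain ⟨x₀, hx₀⟩ := hc
  have hU : IsOpen (s ⁻¹' Set.Iio 0) := isOpen_Iio.preimage hs
  have hmem : s ⁻¹' Set.Iio 0 ∈ nhds x₀ := hU.mem_nhds hx₀
  have hev : (fun x => eval x b) =ᶠ[nhds x₀] 0 := by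
    filter_upwards [hmem] with x hx
    by_contra hbx
    exact absurd (h x hbx) (not_le.mpr hx)
  have := (AnalyticOnNhd.eval_mvPolynomial (𝕜 := ℝ) b).eqOn_zero_of_preconnected_of_eventuallyEq_zero
    isPreconnected_univ (Set.mem_univ x₀) hev
  exact hb (MvPolynomial.funext fun x => by simpa using this (Set.mem_univ x))

lemma aux_quad {m : ℕ} (A B : Matrix (Fin m) (Fin m) ℝ) (u : Fin m → ℝ) :
    u ⬝ᵥ (A * B * Aᵀ) *ᵥ u = (u ᵥ* A) ⬝ᵥ B *ᵥ (u ᵥ* A) := by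
  rw [← Matrix.mulVec_mulVec, ← Matrix.mulVec_mulVec, Matrix.mulVec_transpose,
    Matrix.dotProduct_mulVec]

lemma aux_diag {m : ℕ} (e : Fin m → ℝ) (w : Fin m → ℝ) (he : ∀ j, 0 ≤ e j) :
    0 ≤ w ⬝ᵥ (Matrix.diagonal e) *ᵥ w := by
  have : (Matrix.diagonal e) *ᵥ w = fun j => e j * w j := by
    ext j; simp [Matrix.mulVec_diagonal]
  rw [this]
  refine Finset.sum_nonneg fun j _ => ?_
  have : w j * (e j * w j) = e j * (w j) ^ 2 := by ring
  rw [this]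
  exact mul_nonneg (he j) (sq_nonneg _)

theorem psd_iff_diagonal_nonneg (m n : ℕ)
    (F : Matrix (Fin m) (Fin m) (MvPolynomial (Fin n) ℝ)) (hsym : Fᵀ = F)
    (b : MvPolynomial (Fin n) ℝ) (hb : b ≠ 0)
    (Xp Xm : Matrix (Fin m) (Fin m) (MvPolynomial (Fin n) ℝ))
    (d : Fin m → MvPolynomial (Fin n) ℝ)
    (h1 : Xp * Xm = b • (1 : Matrix (Fin m) (Fin m) (MvPolynomial (Fin n) ℝ)))
    (h2 : Xm * Xp = b • (1 : Matrix (Fin m) (Fin m) (MvPolynomial (Fin n) ℝ)))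
    (h3 : b ^ 2 • F = Xp * Matrix.diagonal d * Xpᵀ)
    (h4 : Matrix.diagonal d = Xm * F * Xmᵀ) :
    (∀ x : Fin n → ℝ, ∀ u : Fin m → ℝ,
        0 ≤ u ⬝ᵥ (F.map (eval x)).mulVec u) ↔
    (∀ j : Fin m, ∀ x : Fin n → ℝ, 0 ≤ eval x (d j)) := by
  constructor
  · intro hpsd j x
    have key : (Matrix.diagonal d).map (eval x)
        = (Xm.map (eval x)) * (F.map (eval x)) * (Xm.map (eval x))ᵀ := by
      rw [h4]
      simp [Matrix.map_mul, Matrix.transpose_map]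
    have h5 : eval x (d j)
        = ((Xm.map (eval x)) * (F.map (eval x)) * (Xm.map (eval x))ᵀ) j j := by
      have := congrArg (fun M => M j j) key
      simpa using this
    have hjj : ∀ M : Matrix (Fin m) (Fin m) ℝ, M j j = Pi.single j 1 ⬝ᵥ M *ᵥ Pi.single j 1 := by
      intro M
      simp [dotProduct, mulVec, Pi.single_apply]
    rw [h5, hjj (Xm.map (eval x) * F.map (eval x) * (Xm.map (eval x))ᵀ), aux_quad]
    exact hpsd x _
  · intro hd x u
    apply aux_dense b hb (fun x => u ⬝ᵥ (F.map (eval x)).mulVec u)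
    · simp only [dotProduct, mulVec, Matrix.map_apply]
      exact continuous_finset_sum _ fun i _ => continuous_const.mul
        (continuous_finset_sum _ fun j _ => ((MvPolynomial.continuous_eval (F i j)).mul
          continuous_const))
    · intro y hy
      have key : ((b ^ 2 • F).map (eval y))
          = (Xp.map (eval y)) * (Matrix.diagonal fun j => eval y (d j)) * (Xp.map (eval y))ᵀ := by
        rw [h3]
        simp [Matrix.map_mul, Matrix.transpose_map, Matrix.diagonal_map]
      have lhs : ((b ^ 2 • F).map (eval y)) = (eval y b) ^ 2 • (F.map (eval y)) := by
        ext i j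
        simp [Matrix.map_apply, smul_eq_mul]
      have h8 : (eval y b) ^ 2 * (u ⬝ᵥ (F.map (eval y)) *ᵥ u)
          = (u ᵥ* Xp.map (eval y)) ⬝ᵥ (Matrix.diagonal fun j => eval y (d j)) *ᵥ
            (u ᵥ* Xp.map (eval y)) := by
        rw [← aux_quad, ← key, lhs, Matrix.smul_mulVec, dotProduct_smul, smul_eq_mul]
      have hpos : (0:ℝ) < (eval y b) ^ 2 := by positivity
      have hsum := aux_diag (fun j => eval y (d j)) (u ᵥ* Xp.map (eval y)) (fun j => hd j y)
      nlinarith [h8]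
end
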